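/- arXiv:2510.14632 — 5 statements merged into one kernel-verified Lean document; each statement's English description precedes it below -/
import Mathlib

section
/- Let X be a real Banach space, U a strongly continuous one-parameter group of linear isometries of X, 0 ≤ s < T, M ≥ 0, B : [s,T] → L(X) continuous with ‖B(t)‖ ≤ M, and let S_B denote the associated evolution operator. Then S_B(t,t) = id for all t ∈ [s,T], and the cocycle (evolution) property S_B(t,r) ∘ S_B(r,s') = S_B(t,s') holds whenever s ≤ s' ≤ r ≤ t ≤ T. -/
/-!
At equal times the Duhamel integral is empty and `U 0 = id`. For the cocycle property, splitting
the integral at `r` and using `U (t - τ) = U (t - r) ∘ U (r - τ)` shows that `t ↦ S t s' x` solves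
the Duhamel equation started at time `r` from `S r s' x`, and so does `t ↦ S t r (S r s' x)`.
Since `U` is isometric and `‖B‖ ≤ M` on the compact interval, the difference `w` of two
solutions satisfies `‖w t‖ ≤ M ∫_r^t ‖w‖`, so it vanishes by Grönwall's inequality.
-/

open MeasureTheory Set

theorem eq_zero_of_le_mul_intervalIntegral {d : ℝ → ℝ} {K a b : ℝ}
    (hd : ContinuousOn d (Icc a b)) (hd₀ : ∀ t ∈ Icc a b, 0 ≤ d t)
    (hle : ∀ t ∈ Icc a b, d t ≤ K * ∫ τ in a..t, d τ) :
    ∀ t ∈ Icc a b, d t = 0 := by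
  set g : ℝ → ℝ := fun t => ∫ τ in a..t, d τ
  have hg₀ : ∀ t ∈ Icc a b, 0 ≤ g t := fun t ht =>
    intervalIntegral.integral_nonneg ht.1 fun τ hτ => hd₀ τ ⟨hτ.1, hτ.2.trans ht.2⟩
  have hg' : ∀ t ∈ Icc a b, HasDerivWithinAt g (d t) (Icc a b) t := fun t ht =>
    have : Fact (t ∈ Icc a b) := ⟨ht⟩
    intervalIntegral.integral_hasDerivWithinAt_right
      ((hd.mono (Icc_subset_Icc_right ht.2)).intervalIntegrable_of_Icc ht.1)
      (hd.stronglyMeasurableAtFilter_nhdsWithin measurableSet_Icc t) (hd t ht)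
  have hg_zero : ∀ t ∈ Icc a b, g t = 0 :=
    eq_zero_of_abs_deriv_le_mul_abs_self_of_eq_zero_right
      (fun t ht => (hg' t ht).continuousWithinAt)
      (fun t ht => (hg' t (Ico_subset_Icc_self ht)).mono_of_mem_nhdsWithin
        (Icc_mem_nhdsGE_of_mem ht))
      intervalIntegral.integral_same
      (fun t ht => by
        have ht' := Ico_subset_Icc_self ht
        rw [Real.norm_of_nonneg (hd₀ t ht'), Real.norm_of_nonneg (hg₀ t ht')]
        exact hle t ht')
  intro t ht
  refine le_antisymm ?_ (hd₀ t ht)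
  calc d t ≤ K * g t := hle t ht
    _ = 0 := by rw [hg_zero t ht, mul_zero]

theorem continuous_uncurry_of_norm_apply_le {α X Y : Type*} [TopologicalSpace α]
    [SeminormedAddCommGroup X] [NormedSpace ℝ X] [SeminormedAddCommGroup Y] [NormedSpace ℝ Y]
    {U : α → X →L[ℝ] Y} (hU : ∀ a x, ‖U a x‖ ≤ ‖x‖) (hUcont : ∀ x, Continuous fun a => U a x) :
    Continuous fun p : α × X => U p.1 p.2 := by
  refine continuous_iff_continuousAt.2 fun ⟨a, x⟩ => ?_
  rw [ContinuousAt, tendsto_iff_norm_sub_tendsto_zero]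
  have hbound : ∀ p : α × X, ‖U p.1 p.2 - U a x‖ ≤ ‖p.2 - x‖ + ‖U p.1 x - U a x‖ := fun p =>
    calc ‖U p.1 p.2 - U a x‖ = ‖U p.1 (p.2 - x) + (U p.1 x - U a x)‖ := by
          rw [map_sub, sub_add_sub_cancel]
      _ ≤ ‖p.2 - x‖ + ‖U p.1 x - U a x‖ := (norm_add_le _ _).trans (by gcongr; exact hU _ _)
  refine squeeze_zero (fun _ => norm_nonneg _) hbound ?_
  have hcont : Continuous fun p : α × X => ‖p.2 - x‖ + ‖U p.1 x - U a x‖ := by fun_prop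
  simpa using hcont.tendsto (a, x)

section Duhamel

variable {X : Type*} [NormedAddCommGroup X] [NormedSpace ℝ X] {U B : ℝ → X →L[ℝ] X}

theorem intervalIntegrable_duhamelIntegrand (hU : Continuous fun p : ℝ × X => U p.1 p.2)
    {a b c d : ℝ} {w : ℝ → X} (hB : ContinuousOn B (Icc a b)) (hw : ContinuousOn w (Icc a b))
    (hc : a ≤ c) (hcd : c ≤ d) (hd : d ≤ b) (t : ℝ) :
    IntervalIntegrable (fun τ => U (t - τ) (B τ (w τ))) volume c d :=
  have hcont : ContinuousOn (fun τ => U (t - τ) (B τ (w τ))) (Icc a b) :=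
    hU.comp_continuousOn ((continuousOn_const.sub continuousOn_id).prodMk (hB.clm_apply hw))
  (hcont.mono (Icc_subset_Icc hc hd)).intervalIntegrable_of_Icc hcd

theorem eq_zero_of_eq_duhamelIntegral (hU : Continuous fun p : ℝ × X => U p.1 p.2)
    (hU₁ : ∀ t x, ‖U t x‖ ≤ ‖x‖) {r T : ℝ} {w : ℝ → X} (hB : ContinuousOn B (Icc r T))
    (hw : ContinuousOn w (Icc r T))
    (hweq : ∀ t ∈ Icc r T, w t = ∫ τ in r..t, U (t - τ) (B τ (w τ))) :
    ∀ t ∈ Icc r T, w t = 0 := by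
  obtain ⟨M, hM⟩ := isCompact_Icc.exists_bound_of_continuousOn hB
  have hle : ∀ t ∈ Icc r T, ‖w t‖ ≤ M * ∫ τ in r..t, ‖w τ‖ := fun t ht =>
    calc ‖w t‖ ≤ ∫ τ in r..t, ‖U (t - τ) (B τ (w τ))‖ := by
          rw [hweq t ht]; exact intervalIntegral.norm_integral_le_integral_norm ht.1
      _ ≤ ∫ τ in r..t, M * ‖w τ‖ := by
          have hIcc : Icc r t ⊆ Icc r T := Icc_subset_Icc_right ht.2
          refine intervalIntegral.integral_mono_on ht.1
            (intervalIntegrable_duhamelIntegrand hU hB hw le_rfl ht.1 ht.2 t).norm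
            (((continuousOn_const.mul hw.norm).mono hIcc).intervalIntegrable_of_Icc ht.1)
            fun τ hτ => ?_
          calc ‖U (t - τ) (B τ (w τ))‖ ≤ ‖B τ (w τ)‖ := hU₁ _ _
            _ ≤ ‖B τ‖ * ‖w τ‖ := (B τ).le_opNorm _
            _ ≤ M * ‖w τ‖ := by gcongr; exact hM τ ⟨hτ.1, hτ.2.trans ht.2⟩
      _ = M * ∫ τ in r..t, ‖w τ‖ := intervalIntegral.integral_const_mul _ _
  intro t ht
  exact norm_eq_zero.1 <|
    eq_zero_of_le_mul_intervalIntegral hw.norm (fun _ _ => norm_nonneg _) hle t ht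

theorem eqOn_of_duhamel (hU : Continuous fun p : ℝ × X => U p.1 p.2)
    (hU₁ : ∀ t x, ‖U t x‖ ≤ ‖x‖) {r T : ℝ} {x : X} {v w : ℝ → X} (hB : ContinuousOn B (Icc r T))
    (hv : ContinuousOn v (Icc r T)) (hw : ContinuousOn w (Icc r T))
    (hveq : ∀ t ∈ Icc r T, v t = U (t - r) x + ∫ τ in r..t, U (t - τ) (B τ (v τ)))
    (hweq : ∀ t ∈ Icc r T, w t = U (t - r) x + ∫ τ in r..t, U (t - τ) (B τ (w τ))) :
    EqOn v w (Icc r T) := by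
  have hdiff : ∀ t ∈ Icc r T,
      v t - w t = ∫ τ in r..t, U (t - τ) (B τ (v τ - w τ)) := fun t ht => by
    simp only [map_sub]
    rw [intervalIntegral.integral_sub
      (intervalIntegrable_duhamelIntegrand hU hB hv le_rfl ht.1 ht.2 t)
      (intervalIntegrable_duhamelIntegrand hU hB hw le_rfl ht.1 ht.2 t), hveq t ht, hweq t ht,
      add_sub_add_left_eq_sub]
  exact fun t ht => sub_eq_zero.1 (eq_zero_of_eq_duhamelIntegral hU hU₁ hB (hv.sub hw) hdiff t ht)

theorem duhamel_restart [CompleteSpace X] (hU : Continuous fun p : ℝ × X => U p.1 p.2)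
    (hUadd : ∀ a b, U (a + b) = (U a).comp (U b)) {s r T : ℝ} {x : X} {w : ℝ → X}
    (hB : ContinuousOn B (Icc s T)) (hw : ContinuousOn w (Icc s T))
    (hweq : ∀ t ∈ Icc s T, w t = U (t - s) x + ∫ τ in s..t, U (t - τ) (B τ (w τ)))
    (hr : r ∈ Icc s T) :
    ∀ t ∈ Icc r T, w t = U (t - r) (w r) + ∫ τ in r..t, U (t - τ) (B τ (w τ)) := by
  intro t ht
  have hU_split : ∀ a, U (t - a) = (U (t - r)).comp (U (r - a)) := fun a => by
    rw [← hUadd, sub_add_sub_cancel]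
  have hpush : U (t - r) (∫ τ in s..r, U (r - τ) (B τ (w τ)))
      = ∫ τ in s..r, U (t - τ) (B τ (w τ)) := by
    rw [← ContinuousLinearMap.intervalIntegral_comp_comm _
      (intervalIntegrable_duhamelIntegrand hU hB hw le_rfl hr.1 hr.2 r)]
    refine intervalIntegral.integral_congr fun τ _ => ?_
    rw [hU_split τ, ContinuousLinearMap.comp_apply]
  rw [hweq t ⟨hr.1.trans ht.1, ht.2⟩, hweq r hr, map_add, hpush, hU_split s,
    ContinuousLinearMap.comp_apply, add_assoc, intervalIntegral.integral_add_adjacent_intervals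
      (intervalIntegrable_duhamelIntegrand hU hB hw le_rfl hr.1 hr.2 t)
      (intervalIntegrable_duhamelIntegrand hU hB hw hr.1 ht.1 ht.2 t)]

end Duhamel

theorem stmt_4_general
    {X : Type*} [NormedAddCommGroup X] [NormedSpace ℝ X] [CompleteSpace X]
    (U : ℝ → X →L[ℝ] X)
    (hU0 : U 0 = ContinuousLinearMap.id ℝ X)
    (hUadd : ∀ a b : ℝ, U (a + b) = (U a).comp (U b))
    (hUiso : ∀ (t : ℝ) (x : X), ‖U t x‖ = ‖x‖)
    (hUcont : ∀ x : X, Continuous fun t : ℝ => U t x)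
    (s T : ℝ)
    (B : ℝ → X →L[ℝ] X)
    (hBcont : ContinuousOn B (Icc s T))
    -- the evolution operator `S_B`, characterized by its Duhamel formula
    (S : ℝ → ℝ → X →L[ℝ] X)
    (hScont : ∀ s' ∈ Icc s T, ∀ x : X, ContinuousOn (fun t => S t s' x) (Icc s' T))
    (hSeq : ∀ s' ∈ Icc s T, ∀ x : X, ∀ t ∈ Icc s' T,
      S t s' x = U (t - s') x + ∫ τ in s'..t, U (t - τ) (B τ (S τ s' x))) :
    (∀ t ∈ Icc s T, S t t = ContinuousLinearMap.id ℝ X) ∧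
    (∀ s' r t : ℝ, s ≤ s' → s' ≤ r → r ≤ t → t ≤ T →
      (S t r).comp (S r s') = S t s') := by
  have hU₁ : ∀ t x, ‖U t x‖ ≤ ‖x‖ := fun t x => (hUiso t x).le
  have hU : Continuous fun p : ℝ × X => U p.1 p.2 :=
    continuous_uncurry_of_norm_apply_le hU₁ hUcont
  refine ⟨fun t ht => ?_, fun s' r t hs' hs'r hrt htT => ?_⟩
  · ext x
    simpa [hU0] using hSeq t ht x t ⟨le_rfl, ht.2⟩
  have hs'T : s' ∈ Icc s T := ⟨hs', (hs'r.trans hrt).trans htT⟩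
  have hrT : r ∈ Icc s T := ⟨hs'.trans hs'r, hrt.trans htT⟩
  ext x
  have hrestart := duhamel_restart hU hUadd (hBcont.mono (Icc_subset_Icc_left hs'))
    (hScont s' hs'T x) (hSeq s' hs'T x) ⟨hs'r, hrT.2⟩
  exact eqOn_of_duhamel hU hU₁ (hBcont.mono (Icc_subset_Icc_left hrT.1)) (hScont r hrT _)
    ((hScont s' hs'T x).mono (Icc_subset_Icc_left hs'r)) (hSeq r hrT _) hrestart ⟨hrt, htT⟩

/-- the evolution operator is the identity at equal times and
satisfies the cocycle (evolution) property. -/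
theorem stmt_4
    {X : Type*} [NormedAddCommGroup X] [NormedSpace ℝ X] [CompleteSpace X]
    (U : ℝ → X →L[ℝ] X)
    (hU0 : U 0 = ContinuousLinearMap.id ℝ X)
    (hUadd : ∀ a b : ℝ, U (a + b) = (U a).comp (U b))
    (hUiso : ∀ (t : ℝ) (x : X), ‖U t x‖ = ‖x‖)
    (hUcont : ∀ x : X, Continuous fun t : ℝ => U t x)
    (s T M : ℝ) (hs : 0 ≤ s) (hsT : s < T) (hM : 0 ≤ M)
    (B : ℝ → X →L[ℝ] X)
    (hBcont : ContinuousOn B (Icc s T))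
    (hBbound : ∀ t ∈ Icc s T, ‖B t‖ ≤ M)
    -- the evolution operator `S_B`, characterized by its Duhamel formula
    (S : ℝ → ℝ → X →L[ℝ] X)
    (hScont : ∀ s' ∈ Icc s T, ∀ x : X, ContinuousOn (fun t => S t s' x) (Icc s' T))
    (hSeq : ∀ s' ∈ Icc s T, ∀ x : X, ∀ t ∈ Icc s' T,
      S t s' x = U (t - s') x + ∫ τ in s'..t, U (t - τ) (B τ (S τ s' x))) :
    (∀ t ∈ Icc s T, S t t = ContinuousLinearMap.id ℝ X) ∧
    (∀ s' r t : ℝ, s ≤ s' → s' ≤ r → r ≤ t → t ≤ T →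
      (S t r).comp (S r s') = S t s') :=
  stmt_4_general U hU0 hUadd hUiso hUcont s T B hBcont S hScont hSeq
end

section
/- Let X be a real Banach space, U a strongly continuous one-parameter group of linear isometries of X, 0 ≤ s < T, M ≥ 0. Let B, D : [s,T] → L(X) be continuous with ‖B(t)‖ ≤ M and sup_{t∈[s,T]} ‖D(t)‖ ≤ 1, let S_B and S_{B+D} be the evolution operators associated to the potentials B and B+D respectively, let w_s ∈ X, and define z(t) = ∫_s^t S_B(t,τ)(D(τ)(S_B(τ,s)w_s)) dτ. Then for every t ∈ [s,T]: ‖S_{B+D}(t,s)w_s − S_B(t,s)w_s − z(t)‖ ≤ (T−s)² e^{(3M+2)(T−s)} (sup_{τ∈[s,T]} ‖D(τ)‖)² ‖w_s‖. In other words, the map from the potential to the evolution operator is differentiable with derivative in direction D given by z, with quadratic remainder. -/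
/-!
Write `v = S_{B+D}(·, s) w_s` and `u = S_B(·, s) w_s`. The difference `v - u` is a mild solution
with potential `B`, zero initial value and forcing `D v`, and `v - u - z` is one with forcing
`D (v - u)`; two Grönwall estimates give `‖v - u‖ = O(δ)` and then `‖v - u - z‖ = O(δ²)`, where
`δ = sup ‖D‖`. That `z` is the mild solution with forcing `D u` is Duhamel's formula, obtained by
exchanging the order of integration over the triangle `s ≤ τ ≤ σ ≤ t`. This needs the joint
continuity of `(t, τ) ↦ S_B(t, τ) x`, which comes from the cocycle identity
`S_B(t, τ₁) = S_B(t, τ₂) S_B(τ₂, τ₁)` (uniqueness of mild solutions) and the uniform bound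
`‖S_B(t, τ)‖ ≤ e^{M (T - s)}`.
-/

open MeasureTheory Set Filter Topology

theorem ContinuousOn.clm_apply_of_norm_apply_le {α 𝕜 E F : Type*} [TopologicalSpace α]
    [NontriviallyNormedField 𝕜] [NormedAddCommGroup E] [NormedSpace 𝕜 E]
    [NormedAddCommGroup F] [NormedSpace 𝕜 F]
    {A : α → E →L[𝕜] F} {f : α → E} {s : Set α} {C : ℝ}
    (hA : ∀ x, ContinuousOn (fun p => A p x) s) (hAC : ∀ p ∈ s, ∀ x, ‖A p x‖ ≤ C * ‖x‖)
    (hf : ContinuousOn f s) : ContinuousOn (fun p => A p (f p)) s := by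
  intro p₀ hp₀
  have h : Tendsto (fun p => A p (f p - f p₀)) (𝓝[s] p₀) (𝓝 0) := by
    refine squeeze_zero_norm' (eventually_nhdsWithin_of_forall fun p hp => hAC p hp _) ?_
    simpa using ((hf p₀ hp₀).sub_const (f p₀)).norm.const_mul C
  simpa [ContinuousWithinAt] using h.add (hA (f p₀) p₀ hp₀)

theorem intervalIntegral_triangle_swap {E : Type*} [NormedAddCommGroup E] [NormedSpace ℝ E]
    {a b : ℝ} (hab : a ≤ b) {F : ℝ × ℝ → E} (hF : ContinuousOn F (Icc a b ×ˢ Icc a b)) :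
    ∫ τ in a..b, ∫ σ in τ..b, F (σ, τ) = ∫ σ in a..b, ∫ τ in a..σ, F (σ, τ) := by
  set G : ℝ → ℝ → E := fun τ σ => if τ < σ then F (σ, τ) else 0
  have hG : IntegrableOn (Function.uncurry G) (uIoc a b ×ˢ uIoc a b) := by
    have hGF : Function.uncurry G = {p : ℝ × ℝ | p.1 < p.2}.indicator (F ∘ Prod.swap) := by
      ext ⟨τ, σ⟩; simp [G, indicator]
    rw [hGF, uIoc_of_le hab]
    refine (IntegrableOn.indicator ?_ (measurableSet_lt measurable_fst measurable_snd)).mono_set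
      (prod_mono Ioc_subset_Icc_self Ioc_subset_Icc_self)
    exact (hF.comp continuous_swap.continuousOn fun p hp => ⟨hp.2, hp.1⟩).integrableOn_compact
      (isCompact_Icc.prod isCompact_Icc)
  have h₁ : ∀ τ ∈ uIcc a b, ∫ σ in a..b, G τ σ = ∫ σ in τ..b, F (σ, τ) := by
    intro τ hτ
    rw [uIcc_of_le hab] at hτ
    have : ∀ σ, G τ σ = (Ioi τ).indicator (fun σ => F (σ, τ)) σ := fun σ => by
      simp [G, indicator]
    simp_rw [this]
    rw [intervalIntegral.integral_of_le hab, intervalIntegral.integral_of_le hτ.2,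
      integral_indicator measurableSet_Ioi, Measure.restrict_restrict measurableSet_Ioi,
      inter_comm, Ioc_inter_Ioi, sup_eq_right.2 hτ.1]
  have h₂ : ∀ σ ∈ uIcc a b, ∫ τ in a..b, G τ σ = ∫ τ in a..σ, F (σ, τ) := by
    intro σ hσ
    rw [uIcc_of_le hab] at hσ
    rw [← intervalIntegral.integral_indicator hσ]
    refine intervalIntegral.integral_congr_ae ?_
    filter_upwards [(countable_singleton σ).ae_notMem volume] with τ hτ _
    rcases lt_or_ge τ σ with h | h
    · simp [G, h, h.le]
    · simp [G, not_lt.2 h, (h.lt_of_ne (Ne.symm hτ)).not_ge]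
  rw [← intervalIntegral.integral_congr h₁, ← intervalIntegral.integral_congr h₂,
    intervalIntegral_intervalIntegral_swap hG]

theorem continuousOn_primitive_of_continuousOn_prod {E : Type*} [NormedAddCommGroup E]
    [NormedSpace ℝ E] {a b : ℝ} {F : ℝ × ℝ → E} (hF : ContinuousOn F (Icc a b ×ˢ Icc a b)) :
    ContinuousOn (fun t => ∫ τ in a..t, F (t, τ)) (Icc a b) := by
  rcases lt_or_ge b a with hba | hab
  · simp [Icc_eq_empty_of_lt hba]
  set G : ℝ × ℝ → E := fun p => F (projIcc a b hab p.1, projIcc a b hab p.2)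
  have hG : Continuous G := hF.comp_continuous (by fun_prop) fun p =>
    ⟨Subtype.prop _, Subtype.prop _⟩
  refine (intervalIntegral.continuous_parametric_intervalIntegral_of_continuous
    (f := fun t τ => G (t, τ)) hG continuous_id).continuousOn.congr fun t ht =>
      intervalIntegral.integral_congr fun τ hτ => ?_
  have hτ' : τ ∈ Icc a b := uIcc_subset_Icc (left_mem_Icc.2 hab) ht hτ
  simp [G, projIcc_of_mem hab ht, projIcc_of_mem hab hτ']

theorem gronwallBound_le_mul_exp {δ K ε : ℝ} (x : ℝ) (hK : 0 ≤ K) (hε : 0 ≤ ε) :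
    gronwallBound δ K ε x ≤ (δ + ε * x) * Real.exp (K * x) := by
  rcases hK.eq_or_lt with rfl | hK
  · simp [gronwallBound_K0]
  rw [gronwallBound_of_K_ne_0 hK.ne']
  have hexp : Real.exp (K * x) - 1 ≤ K * x * Real.exp (K * x) := by
    have := Real.add_one_le_exp (-(K * x))
    rw [Real.exp_neg] at this
    have := Real.exp_pos (K * x)
    field_simp at *
    nlinarith
  calc δ * Real.exp (K * x) + ε / K * (Real.exp (K * x) - 1)
      ≤ δ * Real.exp (K * x) + ε / K * (K * x * Real.exp (K * x)) := by gcongr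
    _ = (δ + ε * x) * Real.exp (K * x) := by field_simp

section

variable {X : Type*} [NormedAddCommGroup X] [NormedSpace ℝ X]

structure IsStronglyContinuousIsometryGroup (U : ℝ → X →L[ℝ] X) : Prop where
  map_zero' : U 0 = ContinuousLinearMap.id ℝ X
  map_add' : ∀ a b, U (a + b) = (U a).comp (U b)
  norm_apply : ∀ t x, ‖U t x‖ = ‖x‖
  continuous_apply : ∀ x, Continuous fun t => U t x

namespace IsStronglyContinuousIsometryGroup

variable {U : ℝ → X →L[ℝ] X} (hU : IsStronglyContinuousIsometryGroup U)
include hU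

theorem apply_apply (c d : ℝ) (x : X) : U c (U d x) = U (c + d) x := by
  rw [hU.map_add']; rfl

theorem continuousOn_apply {α : Type*} [TopologicalSpace α] {φ : α → ℝ} {f : α → X}
    {s : Set α} (hφ : Continuous φ) (hf : ContinuousOn f s) :
    ContinuousOn (fun p => U (φ p) (f p)) s :=
  ContinuousOn.clm_apply_of_norm_apply_le (C := 1)
    (fun x => ((hU.continuous_apply x).comp hφ).continuousOn)
    (fun p _ x => by rw [hU.norm_apply, one_mul]) hf

theorem intervalIntegrable_apply_sub {a b : ℝ} {f : ℝ → X} (hf : ContinuousOn f (Icc a b))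
    (t : ℝ) {c d : ℝ} (hc : c ∈ Icc a b) (hd : d ∈ Icc a b) :
    IntervalIntegrable (fun τ => U (t - τ) (f τ)) volume c d :=
  (hU.continuousOn_apply (by fun_prop) (hf.mono (uIcc_subset_Icc hc hd))).intervalIntegrable

end IsStronglyContinuousIsometryGroup

/-- Mild formulation of `w' = A w + h`, `w a = x`, on `[a, b]`, where `A` generates `U`. -/
structure IsMildSolution (U : ℝ → X →L[ℝ] X) (a b : ℝ) (x : X) (h w : ℝ → X) : Prop where
  continuousOn : ContinuousOn w (Icc a b)
  eq : ∀ t ∈ Icc a b, w t = U (t - a) x + ∫ τ in a..t, U (t - τ) (h τ)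

namespace IsMildSolution

variable {U : ℝ → X →L[ℝ] X} {a b : ℝ} {x : X} {h w : ℝ → X}

theorem sub (hU : IsStronglyContinuousIsometryGroup U) {x₁ x₂ : X} {h₁ h₂ w₁ w₂ : ℝ → X}
    (hw₁ : IsMildSolution U a b x₁ h₁ w₁) (hw₂ : IsMildSolution U a b x₂ h₂ w₂)
    (hh₁ : ContinuousOn h₁ (Icc a b)) (hh₂ : ContinuousOn h₂ (Icc a b)) :
    IsMildSolution U a b (x₁ - x₂) (h₁ - h₂) (w₁ - w₂) := by
  refine ⟨hw₁.continuousOn.sub hw₂.continuousOn, fun t ht => ?_⟩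
  have ha : a ∈ Icc a b := left_mem_Icc.2 (ht.1.trans ht.2)
  simp only [Pi.sub_apply, map_sub, hw₁.eq t ht, hw₂.eq t ht]
  rw [intervalIntegral.integral_sub (hU.intervalIntegrable_apply_sub hh₁ t ha ht)
    (hU.intervalIntegrable_apply_sub hh₂ t ha ht)]
  abel

variable [CompleteSpace X]

theorem restrict (hU : IsStronglyContinuousIsometryGroup U) (hw : IsMildSolution U a b x h w)
    (hh : ContinuousOn h (Icc a b)) {c : ℝ} (hc : c ∈ Icc a b) :
    IsMildSolution U c b (w c) h w := by
  refine ⟨hw.continuousOn.mono (Icc_subset_Icc_left hc.1), fun t ht => ?_⟩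
  have ht' : t ∈ Icc a b := ⟨hc.1.trans ht.1, ht.2⟩
  have ha : a ∈ Icc a b := left_mem_Icc.2 (hc.1.trans hc.2)
  rw [hw.eq t ht', hw.eq c hc, map_add, hU.apply_apply, sub_add_sub_cancel,
    ← (U (t - c)).intervalIntegral_comp_comm (hU.intervalIntegrable_apply_sub hh c ha hc),
    ← intervalIntegral.integral_add_adjacent_intervals
      (hU.intervalIntegrable_apply_sub hh t ha hc) (hU.intervalIntegrable_apply_sub hh t hc ht'),
    add_assoc]
  congr 2
  refine intervalIntegral.integral_congr fun τ _ => ?_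
  rw [hU.apply_apply, sub_add_sub_cancel]

/-- In the interaction picture `U (-t) (w t)` the mild equation becomes an integral equation
without memory, to which Grönwall's inequality applies. -/
theorem apply_neg_eq (hU : IsStronglyContinuousIsometryGroup U) (hw : IsMildSolution U a b x h w)
    (hh : ContinuousOn h (Icc a b)) {t : ℝ} (ht : t ∈ Icc a b) :
    U (-t) (w t) = U (-a) x + ∫ τ in a..t, U (-τ) (h τ) := by
  have ha : a ∈ Icc a b := left_mem_Icc.2 (ht.1.trans ht.2)
  rw [hw.eq t ht, map_add, hU.apply_apply,
    ← (U (-t)).intervalIntegral_comp_comm (hU.intervalIntegrable_apply_sub hh t ha ht)]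
  congr 1
  · rw [show -t + (t - a) = -a by ring]
  · refine intervalIntegral.integral_congr fun τ _ => ?_
    rw [hU.apply_apply, show -t + (t - τ) = -τ by ring]

theorem norm_le (hU : IsStronglyContinuousIsometryGroup U)
    (hw : IsMildSolution U a b x h w) (hh : ContinuousOn h (Icc a b)) {K ε : ℝ} (hK : 0 ≤ K)
    (hε : 0 ≤ ε) (hbound : ∀ τ ∈ Icc a b, ‖h τ‖ ≤ K * ‖w τ‖ + ε) {t : ℝ} (ht : t ∈ Icc a b) :
    ‖w t‖ ≤ (‖x‖ + ε * (b - a)) * Real.exp (K * (b - a)) := by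
  have hg : ContinuousOn (fun τ => U (-τ) (h τ)) (Icc a b) :=
    hU.continuousOn_apply continuous_neg hh
  have hderiv : ∀ r ∈ Ico a b,
      HasDerivWithinAt (fun t => U (-t) (w t)) (U (-r) (h r)) (Ici r) r := by
    intro r hr
    have hIcc : Icc a b ∈ 𝓝[>] r := Icc_mem_nhdsGT_of_mem hr
    have hprim := (intervalIntegral.integral_hasDerivWithinAt_right (s := Ici r)
      (hg.mono (uIcc_subset_Icc (left_mem_Icc.2 (hr.1.trans hr.2.le))
        (Ico_subset_Icc_self hr))).intervalIntegrable
      ⟨Icc a b, hIcc, hg.aestronglyMeasurable measurableSet_Icc⟩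
      ((hg r (Ico_subset_Icc_self hr)).mono_of_mem_nhdsWithin hIcc)).const_add (U (-a) x)
    exact hprim.congr_of_eventuallyEq
      (eventuallyEq_of_mem (Icc_mem_nhdsGE_of_mem hr) fun u hu => hw.apply_neg_eq hU hh hu)
      (hw.apply_neg_eq hU hh (Ico_subset_Icc_self hr))
  have hgronwall := norm_le_gronwallBound_of_norm_deriv_right_le (δ := ‖x‖)
    (hU.continuousOn_apply continuous_neg hw.continuousOn) hderiv
    (by rw [hU.norm_apply, hw.eq a (left_mem_Icc.2 (ht.1.trans ht.2))]; simp [hU.map_zero'])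
    (fun r hr => by simpa only [hU.norm_apply] using hbound r (Ico_subset_Icc_self hr)) t ht
  rw [hU.norm_apply] at hgronwall
  calc ‖w t‖ ≤ gronwallBound ‖x‖ K ε (t - a) := hgronwall
    _ ≤ gronwallBound ‖x‖ K ε (b - a) :=
      gronwallBound_mono (norm_nonneg x) hε hK (by linarith [ht.2])
    _ ≤ _ := gronwallBound_le_mul_exp _ hK hε

theorem eqOn_of_potential (hU : IsStronglyContinuousIsometryGroup U)
    {A : ℝ → X →L[ℝ] X} {K : ℝ} (hA : ContinuousOn A (Icc a b))
    (hAK : ∀ τ ∈ Icc a b, ‖A τ‖ ≤ K) (hK : 0 ≤ K) {w₁ w₂ : ℝ → X}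
    (hw₁ : IsMildSolution U a b x (fun τ => A τ (w₁ τ)) w₁)
    (hw₂ : IsMildSolution U a b x (fun τ => A τ (w₂ τ)) w₂) : EqOn w₁ w₂ (Icc a b) := by
  intro t ht
  have hAw₁ := hA.clm_apply hw₁.continuousOn
  have hAw₂ := hA.clm_apply hw₂.continuousOn
  have := (hw₁.sub hU hw₂ hAw₁ hAw₂).norm_le hU (hAw₁.sub hAw₂) hK le_rfl
    (fun τ hτ => by simpa [← map_sub] using (A τ).le_of_opNorm_le (hAK τ hτ) _) ht
  simpa [sub_eq_zero] using this

theorem norm_le_of_forcing_eq (hU : IsStronglyContinuousIsometryGroup U)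
    {B D : ℝ → X →L[ℝ] X} {M δ E : ℝ} (hBM : ∀ τ ∈ Icc a b, ‖B τ‖ ≤ M) (hM : 0 ≤ M)
    (hDδ : ∀ τ ∈ Icc a b, ‖D τ‖ ≤ δ) {e : ℝ → X} (he : ∀ τ ∈ Icc a b, ‖e τ‖ ≤ E)
    (hw : IsMildSolution U a b x h w) (hh : ContinuousOn h (Icc a b))
    (hhe : ∀ τ ∈ Icc a b, h τ = B τ (w τ) + D τ (e τ)) {t : ℝ} (ht : t ∈ Icc a b) :
    ‖w t‖ ≤ (‖x‖ + δ * E * (b - a)) * Real.exp (M * (b - a)) := by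
  have hδE : 0 ≤ δ * E :=
    mul_nonneg ((norm_nonneg _).trans (hDδ t ht)) ((norm_nonneg _).trans (he t ht))
  refine hw.norm_le hU hh hM hδE (fun τ hτ => ?_) ht
  rw [hhe τ hτ]
  exact (norm_add_le _ _).trans (add_le_add ((B τ).le_of_opNorm_le (hBM τ hτ) _)
    ((D τ).le_of_opNorm_le_of_le (hDδ τ hτ) (he τ hτ)))

theorem norm_sub_sub_le (hU : IsStronglyContinuousIsometryGroup U) {B D : ℝ → X →L[ℝ] X}
    {M δ : ℝ} (hB : ContinuousOn B (Icc a b)) (hBM : ∀ τ ∈ Icc a b, ‖B τ‖ ≤ M) (hM : 0 ≤ M)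
    (hD : ContinuousOn D (Icc a b)) (hDδ : ∀ τ ∈ Icc a b, ‖D τ‖ ≤ δ) (hδ : δ ≤ 1)
    {v u z : ℝ → X} (hv : IsMildSolution U a b x (fun τ => (B τ + D τ) (v τ)) v)
    (hu : IsMildSolution U a b x (fun τ => B τ (u τ)) u)
    (hz : IsMildSolution U a b 0 (fun τ => B τ (z τ) + D τ (u τ)) z) {t : ℝ}
    (ht : t ∈ Icc a b) :
    ‖v t - u t - z t‖ ≤ (b - a) ^ 2 * Real.exp ((3 * M + 2) * (b - a)) * δ ^ 2 * ‖x‖ := by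
  set L := b - a
  have hBDv := (hB.add hD).clm_apply hv.continuousOn
  have hBu := hB.clm_apply hu.continuousOn
  have hBzDu := (hB.clm_apply hz.continuousOn).add (hD.clm_apply hu.continuousOn)
  have hv_le : ∀ τ ∈ Icc a b, ‖v τ‖ ≤ ‖x‖ * Real.exp ((M + 1) * L) := fun τ hτ => by
    simpa using hv.norm_le hU hBDv (by linarith) le_rfl (fun σ hσ => by
      rw [add_zero]
      exact (B σ + D σ).le_of_opNorm_le
        ((norm_add_le _ _).trans (add_le_add (hBM σ hσ) ((hDδ σ hσ).trans hδ))) _) hτ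
  have hd := hv.sub hU hu hBDv hBu
  have hd_le : ∀ τ ∈ Icc a b, ‖v τ - u τ‖ ≤ δ * ‖x‖ * L * Real.exp ((2 * M + 1) * L) :=
    fun τ hτ => by
    have := hd.norm_le_of_forcing_eq hU hBM hM hDδ hv_le (hBDv.sub hBu)
      (fun σ _ => by simp only [Pi.sub_apply, add_apply, map_sub]; abel) hτ
    calc ‖v τ - u τ‖ ≤ δ * (‖x‖ * Real.exp ((M + 1) * L)) * L * Real.exp (M * L) := by
          simpa using this
      _ = _ := by rw [show (2 * M + 1) * L = (M + 1) * L + M * L by ring, Real.exp_add]; ring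
  have := (hd.sub hU hz (hBDv.sub hBu) hBzDu).norm_le_of_forcing_eq hU hBM hM hDδ hd_le
    ((hBDv.sub hBu).sub hBzDu)
    (fun σ _ => by simp only [Pi.sub_apply, add_apply, map_sub]; abel) ht
  calc ‖v t - u t - z t‖
      ≤ δ * (δ * ‖x‖ * L * Real.exp ((2 * M + 1) * L)) * L * Real.exp (M * L) := by
        simpa using this
    _ = L ^ 2 * Real.exp ((3 * M + 1) * L) * δ ^ 2 * ‖x‖ := by
      rw [show (3 * M + 1) * L = (2 * M + 1) * L + M * L by ring, Real.exp_add]; ring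
    _ ≤ _ := by gcongr <;> linarith [sub_nonneg.2 (ht.1.trans ht.2)]

end IsMildSolution

def IsEvolutionOperator (U B : ℝ → X →L[ℝ] X) (s T : ℝ) (S : ℝ → ℝ → X →L[ℝ] X) : Prop :=
  ∀ τ ∈ Icc s T, ∀ x, IsMildSolution U τ T x (fun σ => B σ (S σ τ x)) (fun t => S t τ x)

namespace IsEvolutionOperator

variable {U B : ℝ → X →L[ℝ] X} {s T M : ℝ} {S : ℝ → ℝ → X →L[ℝ] X}

theorem apply_self (hU : IsStronglyContinuousIsometryGroup U) (hS : IsEvolutionOperator U B s T S)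
    {τ : ℝ} (hτ : τ ∈ Icc s T) (x : X) : S τ τ x = x := by
  simpa [hU.map_zero'] using (hS τ hτ x).eq τ ⟨le_rfl, hτ.2⟩

theorem continuousOn_forcing (hS : IsEvolutionOperator U B s T S) (hB : ContinuousOn B (Icc s T))
    {τ : ℝ} (hτ : τ ∈ Icc s T) (x : X) : ContinuousOn (fun σ => B σ (S σ τ x)) (Icc τ T) :=
  (hB.mono (Icc_subset_Icc_left hτ.1)).clm_apply (hS τ hτ x).continuousOn

theorem integral_eq_integral_extend {g : ℝ → X} {t : ℝ} (ht : s ≤ t) :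
    ∫ τ in s..t, S t τ (g τ) = ∫ τ in s..t, S (max t τ) τ (g τ) :=
  intervalIntegral.integral_congr fun τ hτ => by
    rw [max_eq_left (by rw [uIcc_of_le ht] at hτ; exact hτ.2)]

variable [CompleteSpace X]

theorem norm_apply_le (hU : IsStronglyContinuousIsometryGroup U)
    (hS : IsEvolutionOperator U B s T S) (hB : ContinuousOn B (Icc s T))
    (hBM : ∀ t ∈ Icc s T, ‖B t‖ ≤ M) (hM : 0 ≤ M) {τ t : ℝ} (hτ : τ ∈ Icc s T)
    (ht : t ∈ Icc τ T) (x : X) : ‖S t τ x‖ ≤ Real.exp (M * (T - s)) * ‖x‖ := by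
  have := (hS τ hτ x).norm_le hU (hS.continuousOn_forcing hB hτ x) hM le_rfl
    (fun σ hσ => by simpa using (B σ).le_of_opNorm_le (hBM σ ⟨hτ.1.trans hσ.1, hσ.2⟩) _) ht
  calc ‖S t τ x‖ ≤ (‖x‖ + 0 * (T - τ)) * Real.exp (M * (T - τ)) := this
    _ ≤ Real.exp (M * (T - s)) * ‖x‖ := by
      rw [zero_mul, add_zero, mul_comm]
      gcongr
      exact hτ.1

theorem apply_eq_apply_apply (hU : IsStronglyContinuousIsometryGroup U)
    (hS : IsEvolutionOperator U B s T S) (hB : ContinuousOn B (Icc s T))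
    (hBM : ∀ t ∈ Icc s T, ‖B t‖ ≤ M) (hM : 0 ≤ M) {τ₁ τ₂ t : ℝ} (hτ₁ : τ₁ ∈ Icc s T)
    (hτ₂ : τ₂ ∈ Icc τ₁ T) (ht : t ∈ Icc τ₂ T) (x : X) : S t τ₁ x = S t τ₂ (S τ₂ τ₁ x) := by
  have hτ₂' : τ₂ ∈ Icc s T := ⟨hτ₁.1.trans hτ₂.1, hτ₂.2⟩
  exact ((hS τ₁ hτ₁ x).restrict hU (hS.continuousOn_forcing hB hτ₁ x) hτ₂).eqOn_of_potential hU
    (hB.mono (Icc_subset_Icc_left hτ₂'.1)) (fun σ hσ => hBM σ ⟨hτ₂'.1.trans hσ.1, hσ.2⟩) hM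
    (hS τ₂ hτ₂' _) ht

theorem norm_apply_sub_self_le (hU : IsStronglyContinuousIsometryGroup U)
    (hS : IsEvolutionOperator U B s T S) (hB : ContinuousOn B (Icc s T))
    (hBM : ∀ t ∈ Icc s T, ‖B t‖ ≤ M) (hM : 0 ≤ M) {τ t : ℝ} (hτ : τ ∈ Icc s T)
    (ht : t ∈ Icc τ T) (x : X) :
    ‖S t τ x - x‖ ≤ ‖U (t - τ) x - x‖ + (t - τ) * (M * (Real.exp (M * (T - s)) * ‖x‖)) := by
  have hbound : ∀ σ ∈ uIoc τ t,
      ‖U (t - σ) (B σ (S σ τ x))‖ ≤ M * (Real.exp (M * (T - s)) * ‖x‖) := by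
    intro σ hσ
    rw [uIoc_of_le ht.1] at hσ
    have hσ' : σ ∈ Icc τ T := ⟨hσ.1.le, hσ.2.trans ht.2⟩
    rw [hU.norm_apply]
    exact (B σ).le_of_opNorm_le_of_le (hBM σ ⟨hτ.1.trans hσ'.1, hσ'.2⟩)
      (hS.norm_apply_le hU hB hBM hM hτ hσ' x)
  calc ‖S t τ x - x‖
      = ‖(U (t - τ) x - x) + ∫ σ in τ..t, U (t - σ) (B σ (S σ τ x))‖ := by
        rw [(hS τ hτ x).eq t ht]; abel_nf
    _ ≤ ‖U (t - τ) x - x‖ + M * (Real.exp (M * (T - s)) * ‖x‖) * |t - τ| :=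
        (norm_add_le _ _).trans (add_le_add_right
          (intervalIntegral.norm_integral_le_of_norm_le_const hbound) _)
    _ = _ := by rw [abs_of_nonneg (sub_nonneg.2 ht.1), mul_comm _ (t - τ)]

theorem norm_extend_sub_extend_le (hU : IsStronglyContinuousIsometryGroup U)
    (hS : IsEvolutionOperator U B s T S) (hB : ContinuousOn B (Icc s T))
    (hBM : ∀ t ∈ Icc s T, ‖B t‖ ≤ M) (hM : 0 ≤ M) {t τ τ' : ℝ} (ht : t ∈ Icc s T)
    (hτ : τ ∈ Icc s T) (hτ' : τ' ∈ Icc s T) (x : X) :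
    ‖S (max t τ) τ x - S (max t τ') τ' x‖ ≤ Real.exp (M * (T - s)) *
      (‖U (min (max t (min τ τ')) (max τ τ') - min τ τ') x - x‖ +
        |τ - τ'| * (M * (Real.exp (M * (T - s)) * ‖x‖))) := by
  wlog hle : τ ≤ τ' generalizing τ τ'
  · rw [norm_sub_rev, min_comm τ, max_comm τ, abs_sub_comm]
    exact this hτ' hτ (le_of_not_ge hle)
  rw [min_eq_left hle, max_eq_right hle, abs_sub_comm, abs_of_nonneg (sub_nonneg.2 hle)]
  set C := Real.exp (M * (T - s))
  have hC : 1 ≤ C := Real.one_le_exp (mul_nonneg hM (sub_nonneg.2 (hτ.1.trans hτ.2)))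
  set ρ := min (max t τ) τ'
  have hρ : ρ ∈ Icc τ T := ⟨le_min (le_max_right _ _) hle, (min_le_right _ _).trans hτ'.2⟩
  have hkey : ‖S (max t τ) τ x - S (max t τ') τ' x‖ ≤ C * ‖S ρ τ x - x‖ := by
    rcases le_total τ' t with h | h
    · rw [max_eq_left (hle.trans h), max_eq_left h,
        show ρ = τ' from min_eq_right (le_max_of_le_left h),
        hS.apply_eq_apply_apply hU hB hBM hM hτ ⟨hle, hτ'.2⟩ ⟨h, ht.2⟩, ← map_sub]
      exact hS.norm_apply_le hU hB hBM hM hτ' ⟨h, ht.2⟩ _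
    · rw [max_eq_right h, hS.apply_self hU hτ', show ρ = max t τ from min_eq_left (max_le h hle)]
      exact le_mul_of_one_le_left (norm_nonneg _) hC
  calc _ ≤ C * ‖S ρ τ x - x‖ := hkey
    _ ≤ C * (‖U (ρ - τ) x - x‖ + (ρ - τ) * (M * (C * ‖x‖))) := by
      gcongr; exact hS.norm_apply_sub_self_le hU hB hBM hM hτ hρ x
    _ ≤ C * (‖U (ρ - τ) x - x‖ + (τ' - τ) * (M * (C * ‖x‖))) := by
      gcongr
      exact min_le_right _ _

/-- `S (max t τ) τ` extends `S t τ` by the identity below the diagonal. -/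
theorem continuousOn_extend_apply (hU : IsStronglyContinuousIsometryGroup U)
    (hS : IsEvolutionOperator U B s T S) (hB : ContinuousOn B (Icc s T))
    (hBM : ∀ t ∈ Icc s T, ‖B t‖ ≤ M) (hM : 0 ≤ M) (x : X) :
    ContinuousOn (fun p : ℝ × ℝ => S (max p.1 p.2) p.2 x) (Icc s T ×ˢ Icc s T) := by
  rintro ⟨t₀, τ₀⟩ ⟨ht₀, hτ₀⟩
  set C := Real.exp (M * (T - s))
  set β : ℝ × ℝ → ℝ := fun p =>
    C * (‖U (min (max p.1 (min p.2 τ₀)) (max p.2 τ₀) - min p.2 τ₀) x - x‖ +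
      |p.2 - τ₀| * (M * (C * ‖x‖)))
  have hβ : Tendsto β (𝓝 (t₀, τ₀)) (𝓝 0) := by
    have : Continuous β := by
      have := hU.continuous_apply x
      fun_prop
    simpa [β, hU.map_zero'] using this.tendsto (t₀, τ₀)
  have h₁ : Tendsto (fun p : ℝ × ℝ => S (max p.1 p.2) p.2 x - S (max p.1 τ₀) τ₀ x)
      (𝓝[Icc s T ×ˢ Icc s T] (t₀, τ₀)) (𝓝 0) :=
    squeeze_zero_norm' (eventually_nhdsWithin_of_forall fun p hp =>
      hS.norm_extend_sub_extend_le hU hB hBM hM hp.1 hp.2 hτ₀ x) (hβ.mono_left nhdsWithin_le_nhds)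
  have h₂ : ContinuousOn (fun p : ℝ × ℝ => S (max p.1 τ₀) τ₀ x) (Icc s T ×ˢ Icc s T) :=
    (hS τ₀ hτ₀ x).continuousOn.comp (continuous_fst.max continuous_const).continuousOn
      fun p hp => ⟨le_max_right _ _, max_le hp.1.2 hτ₀.2⟩
  simpa [ContinuousWithinAt] using h₁.add (h₂ (t₀, τ₀) ⟨ht₀, hτ₀⟩)

theorem continuousOn_extend_apply_comp (hU : IsStronglyContinuousIsometryGroup U)
    (hS : IsEvolutionOperator U B s T S) (hB : ContinuousOn B (Icc s T))
    (hBM : ∀ t ∈ Icc s T, ‖B t‖ ≤ M) (hM : 0 ≤ M) {g : ℝ → X} (hg : ContinuousOn g (Icc s T)) :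
    ContinuousOn (fun p : ℝ × ℝ => S (max p.1 p.2) p.2 (g p.2)) (Icc s T ×ˢ Icc s T) :=
  ContinuousOn.clm_apply_of_norm_apply_le (A := fun p : ℝ × ℝ => S (max p.1 p.2) p.2)
    (hS.continuousOn_extend_apply hU hB hBM hM)
    (fun _ hp => hS.norm_apply_le hU hB hBM hM hp.2 ⟨le_max_right _ _, max_le hp.1.2 hp.2.2⟩)
    (hg.comp continuousOn_snd fun _ hp => hp.2)

theorem continuousOn_integral (hU : IsStronglyContinuousIsometryGroup U)
    (hS : IsEvolutionOperator U B s T S) (hB : ContinuousOn B (Icc s T))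
    (hBM : ∀ t ∈ Icc s T, ‖B t‖ ≤ M) (hM : 0 ≤ M) {g : ℝ → X} (hg : ContinuousOn g (Icc s T)) :
    ContinuousOn (fun t => ∫ τ in s..t, S t τ (g τ)) (Icc s T) :=
  (continuousOn_primitive_of_continuousOn_prod
    (hS.continuousOn_extend_apply_comp hU hB hBM hM hg)).congr fun _ ht =>
      integral_eq_integral_extend ht.1

theorem integral_eq (hU : IsStronglyContinuousIsometryGroup U)
    (hS : IsEvolutionOperator U B s T S) (hB : ContinuousOn B (Icc s T))
    (hBM : ∀ t ∈ Icc s T, ‖B t‖ ≤ M) (hM : 0 ≤ M) {g : ℝ → X} (hg : ContinuousOn g (Icc s T))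
    {t : ℝ} (ht : t ∈ Icc s T) :
    ∫ τ in s..t, S t τ (g τ) =
      ∫ τ in s..t, U (t - τ) (B τ (∫ σ in s..τ, S τ σ (g σ)) + g τ) := by
  set Φ : ℝ × ℝ → X := fun p => S (max p.1 p.2) p.2 (g p.2)
  have hΦ := hS.continuousOn_extend_apply_comp hU hB hBM hM hg
  have hst : Icc s t ⊆ Icc s T := Icc_subset_Icc_right ht.2
  set F : ℝ × ℝ → X := fun p => U (t - p.1) (B p.1 (Φ p))
  have hF : ContinuousOn F (Icc s t ×ˢ Icc s t) :=
    hU.continuousOn_apply (by fun_prop)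
      (((hB.comp continuousOn_fst fun _ hp => hp.1).clm_apply hΦ).mono (prod_mono hst hst))
  have hΦ_slice : ∀ σ ∈ Icc s T, ContinuousOn (fun τ => Φ (σ, τ)) (Icc s σ) := fun σ hσ =>
    hΦ.comp (continuousOn_const.prodMk continuousOn_id) fun τ hτ =>
      ⟨hσ, ⟨hτ.1, hτ.2.trans hσ.2⟩⟩
  have hUg : ContinuousOn (fun τ => U (t - τ) (g τ)) (Icc s t) :=
    hU.continuousOn_apply (by fun_prop) (hg.mono hst)
  have hΦ_expand : ∀ τ ∈ uIcc s t, Φ (t, τ) - U (t - τ) (g τ) = ∫ σ in τ..t, F (σ, τ) := by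
    intro τ hτ
    rw [uIcc_of_le ht.1] at hτ
    simp only [Φ, F, max_eq_left hτ.2]
    rw [(hS τ (hst hτ) (g τ)).eq t ⟨hτ.2, ht.2⟩, add_sub_cancel_left]
    refine intervalIntegral.integral_congr fun σ hσ => ?_
    rw [uIcc_of_le hτ.2] at hσ
    simp only [max_eq_left hσ.1]
  have hinner : ∀ σ ∈ uIcc s t,
      ∫ τ in s..σ, F (σ, τ) = U (t - σ) (B σ (∫ τ in s..σ, S σ τ (g τ))) := by
    intro σ hσ
    rw [uIcc_of_le ht.1] at hσ
    rw [integral_eq_integral_extend hσ.1]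
    exact ((U (t - σ)).comp (B σ)).intervalIntegral_comp_comm (f := fun τ => Φ (σ, τ))
      ((hΦ_slice σ (hst hσ)).intervalIntegrable_of_Icc hσ.1)
  rw [integral_eq_integral_extend ht.1]
  calc ∫ τ in s..t, Φ (t, τ)
      = (∫ τ in s..t, U (t - τ) (g τ)) + ∫ τ in s..t, (Φ (t, τ) - U (t - τ) (g τ)) := by
        rw [intervalIntegral.integral_sub ((hΦ_slice t ht).intervalIntegrable_of_Icc ht.1)
          (hUg.intervalIntegrable_of_Icc ht.1), add_sub_cancel]
    _ = (∫ τ in s..t, U (t - τ) (g τ)) + ∫ σ in s..t, ∫ τ in s..σ, F (σ, τ) := by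
        rw [intervalIntegral.integral_congr hΦ_expand, intervalIntegral_triangle_swap ht.1 hF]
    _ = _ := by
        rw [intervalIntegral.integral_congr hinner, ← intervalIntegral.integral_add
          (hUg.intervalIntegrable_of_Icc ht.1) ((hU.continuousOn_apply (by fun_prop)
            ((hB.mono hst).clm_apply ((hS.continuousOn_integral hU hB hBM hM hg).mono hst))
              ).intervalIntegrable_of_Icc ht.1)]
        simp only [map_add, add_comm]

theorem isMildSolution_integral (hU : IsStronglyContinuousIsometryGroup U)
    (hS : IsEvolutionOperator U B s T S) (hB : ContinuousOn B (Icc s T))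
    (hBM : ∀ t ∈ Icc s T, ‖B t‖ ≤ M) (hM : 0 ≤ M) {g : ℝ → X} (hg : ContinuousOn g (Icc s T)) :
    IsMildSolution U s T 0 (fun τ => B τ (∫ σ in s..τ, S τ σ (g σ)) + g τ)
      (fun t => ∫ τ in s..t, S t τ (g τ)) :=
  ⟨hS.continuousOn_integral hU hB hBM hM hg, fun t ht => by
    rw [map_zero, zero_add]; exact hS.integral_eq hU hB hBM hM hg ht⟩

end IsEvolutionOperator

end

theorem stmt_5_general
    {X : Type*} [NormedAddCommGroup X] [NormedSpace ℝ X] [CompleteSpace X]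
    (U : ℝ → X →L[ℝ] X)
    (hU0 : U 0 = ContinuousLinearMap.id ℝ X)
    (hUadd : ∀ a b : ℝ, U (a + b) = (U a).comp (U b))
    (hUiso : ∀ (t : ℝ) (x : X), ‖U t x‖ = ‖x‖)
    (hUcont : ∀ x : X, Continuous fun t : ℝ => U t x)
    (s T M : ℝ) (hsT : s < T) (hM : 0 ≤ M)
    (B D : ℝ → X →L[ℝ] X)
    (hBcont : ContinuousOn B (Icc s T))
    (hBbound : ∀ t ∈ Icc s T, ‖B t‖ ≤ M)
    (hDcont : ContinuousOn D (Icc s T))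
    (hDbound : ∀ t ∈ Icc s T, ‖D t‖ ≤ 1)
    -- the evolution operator of the potential `B`
    (SB : ℝ → ℝ → X →L[ℝ] X)
    (hSBcont : ∀ s' ∈ Icc s T, ∀ x : X, ContinuousOn (fun t => SB t s' x) (Icc s' T))
    (hSBeq : ∀ s' ∈ Icc s T, ∀ x : X, ∀ t ∈ Icc s' T,
      SB t s' x = U (t - s') x + ∫ τ in s'..t, U (t - τ) (B τ (SB τ s' x)))
    -- the evolution operator of the potential `B + D`, from initial time `s`
    (SBD : ℝ → X →L[ℝ] X)
    (hSBDcont : ∀ x : X, ContinuousOn (fun t => SBD t x) (Icc s T))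
    (hSBDeq : ∀ x : X, ∀ t ∈ Icc s T,
      SBD t x = U (t - s) x + ∫ τ in s..t, U (t - τ) ((B τ + D τ) (SBD τ x)))
    (ws : X)
    (z : ℝ → X)
    (hz : ∀ t : ℝ, z t = ∫ τ in s..t, SB t τ (D τ (SB τ s ws))) :
    ∀ t ∈ Icc s T,
      ‖SBD t ws - SB t s ws - z t‖ ≤
        (T - s) ^ 2 * Real.exp ((3 * M + 2) * (T - s)) *
          (⨆ τ : Icc s T, ‖D (τ : ℝ)‖) ^ 2 * ‖ws‖ := by
  intro t ht
  have hU : IsStronglyContinuousIsometryGroup U := ⟨hU0, hUadd, hUiso, hUcont⟩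
  have hS : IsEvolutionOperator U B s T SB := fun τ hτ x => ⟨hSBcont τ hτ x, hSBeq τ hτ x⟩
  have hs : s ∈ Icc s T := left_mem_Icc.2 hsT.le
  have hbdd : BddAbove (range fun τ : Icc s T => ‖D τ‖) :=
    ⟨1, forall_mem_range.2 fun τ => hDbound τ τ.2⟩
  have : Nonempty (Icc s T) := ⟨⟨s, hs⟩⟩
  have hu := hS s hs ws
  obtain rfl : z = fun t => ∫ τ in s..t, SB t τ (D τ (SB τ s ws)) := funext hz
  exact IsMildSolution.norm_sub_sub_le hU hBcont hBbound hM hDcont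
    (fun τ hτ => le_ciSup hbdd ⟨τ, hτ⟩) (ciSup_le fun τ => hDbound τ τ.2)
    ⟨hSBDcont ws, hSBDeq ws⟩ hu
    (hS.isMildSolution_integral hU hBcont hBbound hM (hDcont.clm_apply hu.continuousOn)) ht

/-- differentiability of the potential-to-evolution-operator map,
with explicit derivative and quadratic remainder. -/
theorem stmt_5
    {X : Type*} [NormedAddCommGroup X] [NormedSpace ℝ X] [CompleteSpace X]
    (U : ℝ → X →L[ℝ] X)
    (hU0 : U 0 = ContinuousLinearMap.id ℝ X)
    (hUadd : ∀ a b : ℝ, U (a + b) = (U a).comp (U b))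
    (hUiso : ∀ (t : ℝ) (x : X), ‖U t x‖ = ‖x‖)
    (hUcont : ∀ x : X, Continuous fun t : ℝ => U t x)
    (s T M : ℝ) (hs : 0 ≤ s) (hsT : s < T) (hM : 0 ≤ M)
    (B D : ℝ → X →L[ℝ] X)
    (hBcont : ContinuousOn B (Icc s T))
    (hBbound : ∀ t ∈ Icc s T, ‖B t‖ ≤ M)
    (hDcont : ContinuousOn D (Icc s T))
    (hDbound : ∀ t ∈ Icc s T, ‖D t‖ ≤ 1)
    -- the evolution operator of the potential `B`
    (SB : ℝ → ℝ → X →L[ℝ] X)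
    (hSBcont : ∀ s' ∈ Icc s T, ∀ x : X, ContinuousOn (fun t => SB t s' x) (Icc s' T))
    (hSBeq : ∀ s' ∈ Icc s T, ∀ x : X, ∀ t ∈ Icc s' T,
      SB t s' x = U (t - s') x + ∫ τ in s'..t, U (t - τ) (B τ (SB τ s' x)))
    -- the evolution operator of the potential `B + D`, from initial time `s`
    (SBD : ℝ → X →L[ℝ] X)
    (hSBDcont : ∀ x : X, ContinuousOn (fun t => SBD t x) (Icc s T))
    (hSBDeq : ∀ x : X, ∀ t ∈ Icc s T,
      SBD t x = U (t - s) x + ∫ τ in s..t, U (t - τ) ((B τ + D τ) (SBD τ x)))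
    (ws : X)
    (z : ℝ → X)
    (hz : ∀ t : ℝ, z t = ∫ τ in s..t, SB t τ (D τ (SB τ s ws))) :
    ∀ t ∈ Icc s T,
      ‖SBD t ws - SB t s ws - z t‖ ≤
        (T - s) ^ 2 * Real.exp ((3 * M + 2) * (T - s)) *
          (⨆ τ : Icc s T, ‖D (τ : ℝ)‖) ^ 2 * ‖ws‖ :=
  stmt_5_general U hU0 hUadd hUiso hUcont s T M hsT hM B D hBcont hBbound hDcont hDbound SB hSBcont
    hSBeq SBD hSBDcont hSBDeq ws z hz
end

section
/- Let H and K be real Hilbert spaces and R, c > 0. Let O₁, O₂ : H → K be bounded linear operators with ‖O_i‖ ≤ R and ‖x‖ ≤ c‖O_i x‖ for all x ∈ H and i = 1,2. Then O₁*O₁ and O₂*O₂ are bijections of H with bounded inverses, and ‖(O₁*O₁)^{-1} − (O₂*O₂)^{-1}‖ ≤ 2Rc⁴ ‖O₁ − O₂‖. -/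
open MeasureTheory Set

open RealInnerProductSpace in
set_option maxHeartbeats 800000 in
lemma aux_gram_inv
    {H K : Type*} [NormedAddCommGroup H] [InnerProductSpace ℝ H] [CompleteSpace H]
    [NormedAddCommGroup K] [InnerProductSpace ℝ K] [CompleteSpace K]
    (c : ℝ) (hc : 0 < c) (O : H →L[ℝ] K)
    (hobs : ∀ x : H, ‖x‖ ≤ c * ‖O x‖) :
    ∃ G : H →L[ℝ] H,
      G.comp ((ContinuousLinearMap.adjoint O).comp O) = ContinuousLinearMap.id ℝ H ∧
      ((ContinuousLinearMap.adjoint O).comp O).comp G = ContinuousLinearMap.id ℝ H ∧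
      ‖G‖ ≤ c ^ 2 := by
  set A : H →L[ℝ] H := (ContinuousLinearMap.adjoint O).comp O with hA
  have hAinner : ∀ x y : H, ⟪A x, y⟫ = ⟪O x, O y⟫ := by
    intro x y
    simp [hA, ContinuousLinearMap.adjoint_inner_left]
  -- the bilinear form associated to A
  set B : H →L[ℝ] H →L[ℝ] ℝ := (innerSL ℝ).comp A with hB
  have hBapply : ∀ x y : H, B x y = ⟪A x, y⟫ := fun x y => rfl
  have coercive : IsCoercive B := by
    refine ⟨(c ^ 2)⁻¹, by positivity, fun u => ?_⟩
    have h1 : ‖u‖ ≤ c * ‖O u‖ := hobs u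
    have h2 : B u u = ⟪O u, O u⟫ := hAinner u u
    rw [h2, real_inner_self_eq_norm_mul_norm, mul_assoc,
      inv_mul_le_iff₀ (by positivity : (0:ℝ) < c ^ 2)]
    nlinarith [norm_nonneg u, norm_nonneg (O u), hc.le]
  set E := coercive.continuousLinearEquivOfBilin with hE
  have hEA : (E : H →L[ℝ] H) = A := by
    ext x
    refine ext_inner_right ℝ fun w => ?_
    exact coercive.continuousLinearEquivOfBilin_apply x w
  refine ⟨E.symm, ?_, ?_, ?_⟩
  · rw [← hEA]; ext x; simp
  · rw [← hEA]; ext x; simp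
  · -- norm bound: for all x, ‖x‖ ≤ c^2 * ‖A x‖
    have key : ∀ x : H, ‖x‖ ≤ c ^ 2 * ‖A x‖ := by
      intro x
      rcases eq_or_ne x 0 with rfl | hx
      · simp
      have hxpos : 0 < ‖x‖ := norm_pos_iff.mpr hx
      have h1 : ‖x‖ ^ 2 ≤ c ^ 2 * ⟪A x, x⟫ := by
        have := hobs x
        rw [hAinner x x, real_inner_self_eq_norm_mul_norm]
        nlinarith [norm_nonneg x, norm_nonneg (O x), hc.le]
      have h2 : ⟪A x, x⟫ ≤ ‖A x‖ * ‖x‖ := real_inner_le_norm (A x) x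
      have : ‖x‖ ^ 2 ≤ c ^ 2 * (‖A x‖ * ‖x‖) := by
        refine h1.trans (by nlinarith [hc.le])
      nlinarith
    refine ContinuousLinearMap.opNorm_le_bound _ (by positivity) fun y => ?_
    have := key ((E.symm : H →L[ℝ] H) y)
    have hAE : A ((E.symm : H →L[ℝ] H) y) = y := by
      rw [← hEA]; simp
    rwa [hAE] at this

/-- Lipschitz dependence of the inverse Gramian `(O*O)⁻¹` on the
observation operator `O`. -/
theorem stmt_7
    {H K : Type*} [NormedAddCommGroup H] [InnerProductSpace ℝ H] [CompleteSpace H]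
    [NormedAddCommGroup K] [InnerProductSpace ℝ K] [CompleteSpace K]
    (R c : ℝ) (hR : 0 < R) (hc : 0 < c)
    (O₁ O₂ : H →L[ℝ] K)
    (hO₁norm : ‖O₁‖ ≤ R) (hO₂norm : ‖O₂‖ ≤ R)
    (hobs₁ : ∀ x : H, ‖x‖ ≤ c * ‖O₁ x‖)
    (hobs₂ : ∀ x : H, ‖x‖ ≤ c * ‖O₂ x‖) :
    ∃ G₁ G₂ : H →L[ℝ] H,
      G₁.comp ((ContinuousLinearMap.adjoint O₁).comp O₁) = ContinuousLinearMap.id ℝ H ∧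
      ((ContinuousLinearMap.adjoint O₁).comp O₁).comp G₁ = ContinuousLinearMap.id ℝ H ∧
      G₂.comp ((ContinuousLinearMap.adjoint O₂).comp O₂) = ContinuousLinearMap.id ℝ H ∧
      ((ContinuousLinearMap.adjoint O₂).comp O₂).comp G₂ = ContinuousLinearMap.id ℝ H ∧
      ‖G₁ - G₂‖ ≤ 2 * R * c ^ 4 * ‖O₁ - O₂‖ := by
  obtain ⟨G₁, h₁l, h₁r, h₁n⟩ := aux_gram_inv c hc O₁ hobs₁
  obtain ⟨G₂, h₂l, h₂r, h₂n⟩ := aux_gram_inv c hc O₂ hobs₂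
  set A₁ : H →L[ℝ] H := (ContinuousLinearMap.adjoint O₁).comp O₁ with hA₁
  set A₂ : H →L[ℝ] H := (ContinuousLinearMap.adjoint O₂).comp O₂ with hA₂
  refine ⟨G₁, G₂, h₁l, h₁r, h₂l, h₂r, ?_⟩
  have hdiff : A₂ - A₁ = (ContinuousLinearMap.adjoint O₂).comp (O₂ - O₁)
      + (ContinuousLinearMap.adjoint (O₂ - O₁)).comp O₁ := by
    ext x
    simp [hA₁, hA₂, map_sub, ContinuousLinearMap.sub_apply]
  have hAnorm : ‖A₂ - A₁‖ ≤ 2 * R * ‖O₁ - O₂‖ := by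
    rw [hdiff]
    have e1 : ‖(ContinuousLinearMap.adjoint O₂).comp (O₂ - O₁)‖
        ≤ ‖ContinuousLinearMap.adjoint O₂‖ * ‖O₂ - O₁‖ :=
      ContinuousLinearMap.opNorm_comp_le _ _
    have e2 : ‖(ContinuousLinearMap.adjoint (O₂ - O₁)).comp O₁‖
        ≤ ‖ContinuousLinearMap.adjoint (O₂ - O₁)‖ * ‖O₁‖ :=
      ContinuousLinearMap.opNorm_comp_le _ _
    have n1 : ‖ContinuousLinearMap.adjoint O₂‖ = ‖O₂‖ :=
      ContinuousLinearMap.adjoint.norm_map O₂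
    have n2 : ‖ContinuousLinearMap.adjoint (O₂ - O₁)‖ = ‖O₂ - O₁‖ :=
      ContinuousLinearMap.adjoint.norm_map (O₂ - O₁)
    have n3 : ‖O₂ - O₁‖ = ‖O₁ - O₂‖ := norm_sub_rev _ _
    calc ‖(ContinuousLinearMap.adjoint O₂).comp (O₂ - O₁)
          + (ContinuousLinearMap.adjoint (O₂ - O₁)).comp O₁‖
        ≤ ‖(ContinuousLinearMap.adjoint O₂).comp (O₂ - O₁)‖
          + ‖(ContinuousLinearMap.adjoint (O₂ - O₁)).comp O₁‖ := norm_add_le _ _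
      _ ≤ ‖O₂‖ * ‖O₁ - O₂‖ + ‖O₁ - O₂‖ * ‖O₁‖ := by
          rw [n1, n3] at e1; rw [n2, n3] at e2; linarith
      _ ≤ 2 * R * ‖O₁ - O₂‖ := by nlinarith [norm_nonneg (O₁ - O₂), hR.le]
  have hGdiff : G₁ - G₂ = G₁.comp ((A₂ - A₁).comp G₂) := by
    symm
    rw [ContinuousLinearMap.sub_comp, h₂r, ContinuousLinearMap.comp_sub,
      ← ContinuousLinearMap.comp_assoc, h₁l, ContinuousLinearMap.comp_id,
      ContinuousLinearMap.id_comp]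
  calc ‖G₁ - G₂‖ = ‖G₁.comp ((A₂ - A₁).comp G₂)‖ := by rw [hGdiff]
    _ ≤ ‖G₁‖ * ‖(A₂ - A₁).comp G₂‖ := ContinuousLinearMap.opNorm_comp_le _ _
    _ ≤ ‖G₁‖ * (‖A₂ - A₁‖ * ‖G₂‖) := by
        gcongr
        · exact (ContinuousLinearMap.opNorm_comp_le _ _)
    _ ≤ c ^ 2 * (2 * R * ‖O₁ - O₂‖ * c ^ 2) := by
        have hRd : (0:ℝ) ≤ 2 * R * ‖O₁ - O₂‖ :=
          mul_nonneg (by linarith) (norm_nonneg _)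
        have t1 : ‖A₂ - A₁‖ * ‖G₂‖ ≤ 2 * R * ‖O₁ - O₂‖ * c ^ 2 :=
          mul_le_mul hAnorm h₂n (norm_nonneg _) hRd
        exact mul_le_mul h₁n t1
          (mul_nonneg (norm_nonneg _) (norm_nonneg _)) (by positivity)
    _ = 2 * R * c ^ 4 * ‖O₁ - O₂‖ := by ring
end

section
/- Let E and F be complex Banach spaces, v ∈ E, ℓ > 0, L > 0, and let f : E → F be analytic (holomorphic) on the open ball B(v,ℓ) and satisfy ‖f(z) − f(z')‖ ≤ L‖z − z'‖ for all z, z' ∈ B(v,ℓ). Then for every h ∈ E with ‖h‖ ≤ ℓ/4: ‖f(v+h) − f(v) − Df(v)(h)‖ ≤ 2L‖h‖²/ℓ, where Df(v) denotes the Fréchet derivative of f at v. -/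
/-!
Restrict `f` to the complex line `z ↦ v + z • h`. On the circle `‖z‖ = 3ℓ / (4‖h‖)` the Lipschitz
bound gives `‖f (v + z • h) - f v‖ ≤ 3Lℓ/4`, so Cauchy's estimates bound the `n`-th Taylor
coefficient at `0` by `(3Lℓ/4) (4‖h‖/(3ℓ))ⁿ`; evaluating the Taylor series at `z = 1` and summing
the geometric tail `n ≥ 2` gives `L‖h‖² / (3ℓ/4 - ‖h‖) ≤ 2L‖h‖²/ℓ`.
-/

open Metric Nat Set

section

variable {E F : Type*} [NormedAddCommGroup E] [NormedSpace ℂ E]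
  [NormedAddCommGroup F] [NormedSpace ℂ F]

private theorem norm_sub_sub_smul_deriv_le_aux [CompleteSpace F] {g : ℂ → F} {c w : ℂ}
    {R M : ℝ} (hR : 0 < R) (hg : DiffContOnCl ℂ g (ball c R))
    (hM : ∀ z ∈ sphere c R, ‖g z‖ ≤ M) (hw : ‖w - c‖ < R) :
    ‖g w - g c - (w - c) • deriv g c‖ ≤ M * ‖w - c‖ ^ 2 / (R * (R - ‖w - c‖)) := by
  set q := ‖w - c‖ / R with hq
  have hq0 : 0 ≤ q := by positivity
  have hq1 : q < 1 := (div_lt_one hR).2 hw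
  have htail : HasSum (fun n : ℕ ↦ ((n + 2)! : ℂ)⁻¹ • (w - c) ^ (n + 2) • iteratedDeriv (n + 2) g c)
      (g w - g c - (w - c) • deriv g c) := by
    have hsum := Complex.hasSum_taylorSeries_on_ball hg.differentiableOn (mem_ball_iff_norm.2 hw)
    simpa [Finset.sum_range_succ, sub_sub] using (hasSum_nat_add_iff' 2).2 hsum
  have hterm (n : ℕ) :
      ‖((n + 2)! : ℂ)⁻¹ • (w - c) ^ (n + 2) • iteratedDeriv (n + 2) g c‖ ≤ M * q ^ 2 * q ^ n := by
    have hcauchy := Complex.norm_iteratedDeriv_le_of_forall_mem_sphere_norm_le (n + 2) hR hg hM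
    calc _ = ((n + 2)! : ℝ)⁻¹ * ‖w - c‖ ^ (n + 2) * ‖iteratedDeriv (n + 2) g c‖ := by
          simp [norm_smul, mul_assoc]
      _ ≤ ((n + 2)! : ℝ)⁻¹ * ‖w - c‖ ^ (n + 2) * ((n + 2)! * M / R ^ (n + 2)) := by gcongr
      _ = M * q ^ (n + 2) := by rw [hq, div_pow]; field_simp
      _ = M * q ^ 2 * q ^ n := by ring
  calc _ ≤ M * q ^ 2 * (1 - q)⁻¹ :=
        htail.norm_le_of_bounded ((hasSum_geometric_of_lt_one hq0 hq1).mul_left _) hterm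
    _ = M * ‖w - c‖ ^ 2 / (R * (R - ‖w - c‖)) := by
        have : R - ‖w - c‖ ≠ 0 := by linarith
        rw [hq]; field_simp

theorem Complex.norm_sub_sub_smul_deriv_le_of_forall_mem_sphere_norm_le {g : ℂ → F} {c w : ℂ}
    {R M : ℝ} (hR : 0 < R) (hg : DiffContOnCl ℂ g (ball c R))
    (hM : ∀ z ∈ sphere c R, ‖g z‖ ≤ M) (hw : ‖w - c‖ < R) :
    ‖g w - g c - (w - c) • deriv g c‖ ≤ M * ‖w - c‖ ^ 2 / (R * (R - ‖w - c‖)) := by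
  -- The Taylor series of `g` need not converge in `F` itself, so work in its completion.
  set ι : F →L[ℂ] UniformSpace.Completion F := UniformSpace.Completion.toComplL
  have hιg : HasDerivAt (ι ∘ g) (ι (deriv g c)) c :=
    ι.hasFDerivAt.comp_hasDerivAt c
      (hg.differentiableAt isOpen_ball (mem_ball_self hR)).hasDerivAt
  have := norm_sub_sub_smul_deriv_le_aux hR (ι.differentiable.comp_diffContOnCl hg)
    (fun z hz ↦ by simpa [ι] using hM z hz) hw
  rw [hιg.deriv, Function.comp_apply, Function.comp_apply, ← map_sub, ← map_smul, ← map_sub]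
    at this
  exact (UniformSpace.Completion.norm_coe _).symm.trans_le this

theorem norm_sub_sub_fderiv_le_of_forall_mem_sphere {f : E → F} {v h : E} {ρ M : ℝ}
    (hf : DifferentiableOn ℂ f (closedBall v ρ)) (hM : ∀ z ∈ sphere v ρ, ‖f z - f v‖ ≤ M)
    (hh : ‖h‖ < ρ) :
    ‖f (v + h) - f v - fderiv ℂ f v h‖ ≤ M * ‖h‖ ^ 2 / (ρ * (ρ - ‖h‖)) := by
  rcases eq_or_ne h 0 with rfl | hne
  · simp
  have hρ : 0 < ρ := (norm_nonneg h).trans_lt hh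
  have hhpos : 0 < ‖h‖ := norm_pos_iff.2 hne
  set R := ρ / ‖h‖
  have hline : HasDerivAt (fun z : ℂ ↦ v + z • h) h 0 := by
    simpa using ((hasDerivAt_id (0 : ℂ)).smul_const h).const_add v
  have hnorm (z : ℂ) : ‖v + z • h - v‖ = ‖z‖ * ‖h‖ := by rw [add_sub_cancel_left, norm_smul]
  have hmaps : MapsTo (fun z : ℂ ↦ v + z • h) (closedBall 0 R) (closedBall v ρ) := fun z hz ↦ by
    rw [mem_closedBall_zero_iff] at hz
    rwa [mem_closedBall_iff_norm, hnorm, ← le_div_iff₀ hhpos]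
  have hg : DifferentiableOn ℂ (fun z : ℂ ↦ f (v + z • h) - f v) (closedBall 0 R) :=
    (hf.comp (by fun_prop : Differentiable ℂ fun z : ℂ ↦ v + z • h).differentiableOn
      hmaps).sub_const (f v)
  have hfv : HasFDerivAt f (fderiv ℂ f v) (v + (0 : ℂ) • h) := by
    simpa using (hf.differentiableAt (closedBall_mem_nhds v hρ)).hasFDerivAt
  have hderiv : deriv (fun z : ℂ ↦ f (v + z • h) - f v) 0 = fderiv ℂ f v h :=
    ((hfv.comp_hasDerivAt 0 hline).sub_const (f v)).deriv
  have := Complex.norm_sub_sub_smul_deriv_le_of_forall_mem_sphere_norm_le (w := 1) (M := M)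
    (div_pos hρ hhpos) (hg.diffContOnCl_ball subset_rfl) (fun z hz ↦ by
      apply hM
      rw [mem_sphere_zero_iff_norm] at hz
      rw [mem_sphere_iff_norm, hnorm, hz, div_mul_cancel₀ _ hhpos.ne'])
    (by simpa [R] using (one_lt_div hhpos).2 hh)
  rw [hderiv] at this
  convert this using 1
  · simp
  · simp only [sub_zero, norm_one, one_pow, mul_one]
    field_simp

end

/-- quantitative first-order Taylor estimate for a holomorphic
and Lipschitz function on a ball in a complex Banach space. -/
theorem stmt_11
    {E F : Type*} [NormedAddCommGroup E] [NormedSpace ℂ E]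
    [NormedAddCommGroup F] [NormedSpace ℂ F]
    (v : E) (ℓ L : ℝ) (hℓ : 0 < ℓ) (hL : 0 < L)
    (f : E → F)
    (hf : AnalyticOnNhd ℂ f (Metric.ball v ℓ))
    (hlip : ∀ z ∈ Metric.ball v ℓ, ∀ z' ∈ Metric.ball v ℓ,
      ‖f z - f z'‖ ≤ L * ‖z - z'‖) :
    ∀ h : E, ‖h‖ ≤ ℓ / 4 →
      ‖f (v + h) - f v - fderiv ℂ f v h‖ ≤ 2 * L * ‖h‖ ^ 2 / ℓ := by
  intro h hh
  have hρℓ : 3 * ℓ / 4 < ℓ := by linarith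
  have hsphere (z : E) (hz : z ∈ sphere v (3 * ℓ / 4)) : ‖f z - f v‖ ≤ L * (3 * ℓ / 4) := by
    simpa [mem_sphere_iff_norm.1 hz] using hlip z (sphere_subset_ball hρℓ hz) v (mem_ball_self hℓ)
  calc _ ≤ L * (3 * ℓ / 4) * ‖h‖ ^ 2 / (3 * ℓ / 4 * (3 * ℓ / 4 - ‖h‖)) :=
        norm_sub_sub_fderiv_le_of_forall_mem_sphere
          (hf.differentiableOn.mono (closedBall_subset_ball hρℓ)) hsphere (by linarith)
    _ = L * ‖h‖ ^ 2 / (3 * ℓ / 4 - ‖h‖) := by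
        field_simp
    _ ≤ 2 * L * ‖h‖ ^ 2 / ℓ := by
        rw [div_le_div_iff₀ (by linarith) hℓ]
        nlinarith [mul_nonneg hL.le (sq_nonneg ‖h‖)]
end

section
/- Let T, R₀, M, L, 𝔠 > 0. Let X be a real Hilbert space, U a strongly continuous one-parameter group of linear isometries of X, Q ∈ L(X) an orthogonal projection with Q∘U(t) = U(t)∘Q for all t ∈ ℝ, and C_op ∈ L(X). Let f : X → X be Fréchet differentiable with ‖Df(x)‖ ≤ M and ‖Df(x) − Df(y)‖ ≤ L‖x−y‖ for all x, y in the closed ball of radius 2R₀. Let u, ũ ∈ C([0,T],X) with sup_t ‖u(t)‖ ≤ R₀ and sup_t ‖ũ(t)‖ ≤ R₀ satisfy, for some Bochner-integrable h : [0,T] → X, u(t) = U(t)(u(0)) + ∫₀^t U(t−τ)(f(u(τ)) + h(τ)) dτ and ũ(t) = U(t)(ũ(0)) + ∫₀^t U(t−τ)(f(ũ(τ)) + h(τ)) dτ for all t ∈ [0,T], together with C_op(u(t)) = C_op(ũ(t)) for all t ∈ [0,T] (same observation) and (id − Q)(u(t)) = (id − Q)(ũ(t)) for all t ∈ [0,T]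 (same low-frequency part). Let S be the evolution operator of the potential B(τ) = Q∘Df(ũ(τ)), and assume the observability inequality ‖w₀‖² ≤ 𝔠² ∫₀^T ‖C_op(S(t,0)w₀)‖² dt for all w₀ in the range of Q. Then there exists a constant K > 0, depending only on T, M, 𝔠 and ‖C_op‖, such that sup_{t∈[0,T]} ‖u(t) − ũ(t)‖ < 1/(K·L) implies u(t) = ũ(t) for all t ∈ [0,T]. -/
/-!
Let `w = u - ũ` and `ε = sup ‖w‖`. Equal low-frequency parts give `w = Q w`; applying `Q` to the
Duhamel formula for `w` and linearizing `f` at `ũ` shows that `d = w - S(·,0) w(0)` solves the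
equation with potential `Q Df(ũ)`, forced by `Q` applied to the Taylor remainder, which is
`O(L ε²)`. Gronwall gives `‖d‖ ≤ T L ε² e^{MT}`. Equal observations give
`C_op S(t,0) w(0) = -C_op d(t)`, so observability bounds `‖w(0)‖` by `O(L ε²)`, and the Gronwall
bound `‖w(t)‖ ≤ e^{MT} ‖w(0)‖` turns this into `ε ≤ K L ε²`, incompatible with `0 < ε < 1/(K L)`.
-/

open MeasureTheory Set Filter Topology Real
open scoped RealInnerProductSpace

theorem add_mul_gronwallBound_zero_left (a b t : ℝ) :
    a + b * gronwallBound 0 b a t = a * exp (b * t) := by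
  rcases eq_or_ne b 0 with rfl | hb
  · simp [gronwallBound_K0]
  · rw [gronwallBound_of_K_ne_0 hb]
    field_simp
    ring

theorem le_mul_exp_of_le_add_mul_integral {g : ℝ → ℝ} {a b T : ℝ}
    (hg : ContinuousOn g (Icc 0 T)) (hg₀ : ∀ t ∈ Icc 0 T, 0 ≤ g t) (hb : 0 ≤ b)
    (h : ∀ t ∈ Icc 0 T, g t ≤ a + b * ∫ τ in (0:ℝ)..t, g τ) :
    ∀ t ∈ Icc 0 T, g t ≤ a * exp (b * t) := by
  intro t ht
  have hT : 0 ≤ T := ht.1.trans ht.2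
  set F : ℝ → ℝ := fun t => ∫ τ in (0:ℝ)..t, g τ
  have hFc : ContinuousOn F (Icc 0 T) := by
    simpa only [uIcc_of_le hT] using intervalIntegral.continuousOn_primitive_interval
      (μ := volume) (a := 0) (b := T) (by simpa only [uIcc_of_le hT] using hg.integrableOn_Icc)
  have hFd : ∀ s ∈ Ico 0 T, HasDerivWithinAt F (g s) (Ici s) s := by
    intro s hs
    have hIcc : Icc 0 T ∈ 𝓝[>] s :=
      mem_of_superset (Ioo_mem_nhdsGT hs.2) (fun z hz => ⟨hs.1.trans hz.1.le, hz.2.le⟩)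
    exact intervalIntegral.integral_hasDerivWithinAt_right
      ((hg.mono (Icc_subset_Icc_right hs.2.le)).intervalIntegrable_of_Icc hs.1)
      ⟨Icc 0 T, hIcc, hg.integrableOn_Icc.aestronglyMeasurable⟩
      ((hg s (Ico_subset_Icc_self hs)).mono_of_mem_nhdsWithin hIcc)
  have hF : ‖F t‖ ≤ gronwallBound 0 b a (t - 0) := by
    refine norm_le_gronwallBound_of_norm_deriv_right_le hFc hFd (by simp [F]) ?_ t ht
    intro s hs
    rw [norm_of_nonneg (hg₀ s (Ico_subset_Icc_self hs))]
    linarith [h s (Ico_subset_Icc_self hs), mul_le_mul_of_nonneg_left (le_norm_self (F s)) hb]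
  calc g t ≤ a + b * F t := h t ht
    _ ≤ a + b * gronwallBound 0 b a t := by
        gcongr
        simpa using (le_norm_self (F t)).trans hF
    _ = a * exp (b * t) := add_mul_gronwallBound_zero_left a b t

theorem ContinuousOn.le_ciSup_Icc {g : ℝ → ℝ} {a b t : ℝ} (hg : ContinuousOn g (Icc a b))
    (ht : t ∈ Icc a b) : g t ≤ ⨆ s : Icc a b, g s :=
  le_ciSup (f := fun s : Icc a b => g s)
    (by simpa only [image_eq_range] using isCompact_Icc.bddAbove_image hg) ⟨t, ht⟩

theorem le_mul_sqrt_mul_of_sq_le_integral {F : Type*} [NormedAddCommGroup F] {φ : ℝ → F}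
    {a c β T : ℝ} (hc : 0 ≤ c) (hT : 0 ≤ T)
    (ha : a ^ 2 ≤ c ^ 2 * ∫ t in Icc 0 T, ‖φ t‖ ^ 2) (hφ : ∀ t ∈ Icc 0 T, ‖φ t‖ ≤ β) :
    a ≤ c * √T * β := by
  have hβ : 0 ≤ β := (norm_nonneg _).trans (hφ 0 ⟨le_rfl, hT⟩)
  have hint : ∫ t in Icc 0 T, ‖φ t‖ ^ 2 ≤ β ^ 2 * T := by
    calc ∫ t in Icc 0 T, ‖φ t‖ ^ 2 ≤ ∫ _ in Icc 0 T, β ^ 2 :=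
          integral_mono_of_nonneg (ae_of_all _ fun _ => by positivity)
            (integrableOn_const (by simp))
            ((ae_restrict_iff' measurableSet_Icc).2 (ae_of_all _ fun t ht =>
              pow_le_pow_left₀ (norm_nonneg _) (hφ t ht) 2))
      _ = β ^ 2 * T := by simp [Real.volume_real_Icc_of_le hT, mul_comm]
  refine (le_abs_self a).trans (abs_le_of_sq_le_sq ?_ (by positivity))
  calc a ^ 2 ≤ c ^ 2 * (β ^ 2 * T) := ha.trans (by gcongr)
    _ = (c * √T * β) ^ 2 := by rw [mul_pow, mul_pow, sq_sqrt hT]; ring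

theorem eq_zero_of_le_mul_sq_of_lt_one_div {ε C : ℝ} (hε : 0 ≤ ε) (hle : ε ≤ C * ε ^ 2)
    (hlt : ε < 1 / C) : ε = 0 := by
  refine (hε.eq_or_lt.resolve_right fun hpos => ?_).symm
  have hCε : 1 ≤ C * ε := le_of_mul_le_mul_right (by nlinarith) hpos
  have hC : 0 < C := pos_of_mul_pos_left (one_pos.trans_le hCε) hε
  rw [lt_div_iff₀ hC] at hlt
  linarith

theorem eq_zero_of_le_mul_iSup_sq {g : ℝ → ℝ} {a b C : ℝ} (hab : a ≤ b)
    (hg : ContinuousOn g (Icc a b)) (hg₀ : ∀ t ∈ Icc a b, 0 ≤ g t)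
    (hle : ∀ t ∈ Icc a b, g t ≤ C * (⨆ s : Icc a b, g s) ^ 2)
    (hlt : ⨆ s : Icc a b, g s < 1 / C) : ∀ t ∈ Icc a b, g t = 0 := by
  have : Nonempty (Icc a b) := ⟨⟨a, left_mem_Icc.2 hab⟩⟩
  have hsup := eq_zero_of_le_mul_sq_of_lt_one_div
    ((hg₀ a (left_mem_Icc.2 hab)).trans (hg.le_ciSup_Icc (left_mem_Icc.2 hab)))
    (ciSup_le fun s => hle s s.2) hlt
  exact fun t ht => le_antisymm ((hg.le_ciSup_Icc ht).trans_eq hsup) (hg₀ t ht)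

theorem mem_closedBall_zero_two_mul {E : Type*} [SeminormedAddCommGroup E] {x : E} {R : ℝ}
    (hx : ‖x‖ ≤ R) : x ∈ Metric.closedBall 0 (2 * R) :=
  mem_closedBall_zero_iff.2 (by linarith [norm_nonneg x])

theorem norm_sub_sub_fderiv_apply_le {E F : Type*} [NormedAddCommGroup E] [NormedSpace ℝ E]
    [NormedAddCommGroup F] [NormedSpace ℝ F] {f : E → F} {f' : E → E →L[ℝ] F} {s : Set E}
    {L : ℝ} (hs : Convex ℝ s) (hf : ∀ x ∈ s, HasFDerivWithinAt f (f' x) s x)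
    (hf' : ∀ x ∈ s, ∀ y ∈ s, ‖f' x - f' y‖ ≤ L * ‖x - y‖) {x y : E} (hx : x ∈ s) (hy : y ∈ s) :
    ‖f x - f y - f' y (x - y)‖ ≤ L * ‖x - y‖ ^ 2 := by
  rcases eq_or_ne x y with rfl | hxy
  · simp
  have hL : 0 ≤ L := nonneg_of_mul_nonneg_left ((norm_nonneg _).trans (hf' x hx y hy))
    (norm_pos_iff.2 (sub_ne_zero.2 hxy))
  have hseg : segment ℝ y x ⊆ s := hs.segment_subset hy hx
  rw [sq, ← mul_assoc]
  refine (convex_segment y x).norm_image_sub_le_of_norm_hasFDerivWithin_le'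
    (fun z hz => (hf z (hseg hz)).mono hseg) (fun z hz => ?_)
    (left_mem_segment ℝ y x) (right_mem_segment ℝ y x)
  exact (hf' z (hseg hz) y hy).trans (by gcongr; exact norm_sub_le_of_mem_segment hz)

theorem norm_sub_sub_fderiv_apply_le_add {E F : Type*} [NormedAddCommGroup E]
    [NormedSpace ℝ E] [NormedAddCommGroup F] [NormedSpace ℝ F] {f : E → F}
    {f' : E → E →L[ℝ] F} {s : Set E} {M L : ℝ} (hs : Convex ℝ s)
    (hf : ∀ x ∈ s, HasFDerivWithinAt f (f' x) s x) (hf'M : ∀ x ∈ s, ‖f' x‖ ≤ M)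
    (hf' : ∀ x ∈ s, ∀ y ∈ s, ‖f' x - f' y‖ ≤ L * ‖x - y‖) {x y : E} (hx : x ∈ s) (hy : y ∈ s)
    (z : E) : ‖f x - f y - f' y z‖ ≤ M * ‖x - y - z‖ + L * ‖x - y‖ ^ 2 := by
  have hsplit : f x - f y - f' y z = f' y (x - y - z) + (f x - f y - f' y (x - y)) := by
    rw [map_sub (f' y) (x - y) z]
    abel
  rw [hsplit]
  exact norm_add_le_of_le ((f' y).le_of_opNorm_le (hf'M y hy) _)
    (norm_sub_sub_fderiv_apply_le hs hf hf' hx hy)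

theorem norm_apply_le_of_idempotent_of_symmetric {X : Type*} [NormedAddCommGroup X]
    [InnerProductSpace ℝ X] [CompleteSpace X] {Q : X →L[ℝ] X} (hQidem : Q.comp Q = Q)
    (hQsa : ∀ x y, ⟪Q x, y⟫ = ⟪x, Q y⟫) (x : X) : ‖Q x‖ ≤ ‖x‖ := by
  have hQ : IsStarProjection Q :=
    ⟨hQidem, ContinuousLinearMap.isSelfAdjoint_iff_isSymmetric.2 hQsa⟩
  obtain ⟨_, hQ⟩ := isStarProjection_iff_eq_starProjection_range.1 hQ
  rw [hQ]
  exact Q.range.norm_starProjection_apply_le x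

section Duhamel

variable {E : Type*} [NormedAddCommGroup E] [NormedSpace ℝ E] {U : ℝ → E →L[ℝ] E}

theorem continuous_uncurry_of_norm_apply_le_s14 (hU : ∀ t x, ‖U t x‖ ≤ ‖x‖)
    (hUc : ∀ x, Continuous fun t => U t x) : Continuous fun p : ℝ × E => U p.1 p.2 := by
  rw [continuous_iff_continuousAt]
  rintro ⟨s, x₀⟩
  have h₁ : Tendsto (fun p : ℝ × E => U p.1 (p.2 - x₀)) (𝓝 (s, x₀)) (𝓝 0) :=
    squeeze_zero_norm (fun p => hU p.1 _)
      (by simpa using (continuous_snd.sub (continuous_const (y := x₀))).norm.tendsto (s, x₀))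
  have h₂ : Tendsto (fun p : ℝ × E => U p.1 x₀) (𝓝 (s, x₀)) (𝓝 (U s x₀)) :=
    ((hUc x₀).comp continuous_fst).tendsto _
  simpa [ContinuousAt] using h₁.add h₂

theorem intervalIntegrable_apply_sub (hU : ∀ t x, ‖U t x‖ ≤ ‖x‖)
    (hUc : ∀ x, Continuous fun t => U t x) {g : ℝ → E} {T t : ℝ} (hg : IntegrableOn g (Icc 0 T))
    (ht : t ∈ Icc 0 T) : IntervalIntegrable (fun τ => U (t - τ) (g τ)) volume 0 t := by
  have hg' : IntegrableOn g (Ioc 0 t) := hg.mono_set (Ioc_subset_Icc_self.trans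
    (Icc_subset_Icc_right ht.2))
  rw [intervalIntegrable_iff_integrableOn_Ioc_of_le ht.1]
  refine hg'.norm.mono' ?_ (ae_of_all _ fun τ => hU _ _)
  exact (continuous_uncurry_of_norm_apply_le_s14 hU hUc).comp_aestronglyMeasurable
    ((continuous_const.sub continuous_id).aestronglyMeasurable.prodMk hg'.aestronglyMeasurable)

theorem norm_integral_apply_sub_le (hU : ∀ t x, ‖U t x‖ ≤ ‖x‖) {g : ℝ → E} {φ : ℝ → ℝ} {t : ℝ}
    (ht : 0 ≤ t) (hφ : IntervalIntegrable φ volume 0 t) (hgφ : ∀ τ ∈ Icc 0 t, ‖g τ‖ ≤ φ τ) :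
    ‖∫ τ in (0:ℝ)..t, U (t - τ) (g τ)‖ ≤ ∫ τ in (0:ℝ)..t, φ τ :=
  intervalIntegral.norm_integral_le_of_norm_le ht
    (ae_of_all _ fun τ hτ => (hU _ _).trans (hgφ τ (Ioc_subset_Icc_self hτ))) hφ

theorem add_integral_sub_add_integral {a b : ℝ → E} {x y : E} {t : ℝ}
    (ha : IntervalIntegrable (fun τ => U (t - τ) (a τ)) volume 0 t)
    (hb : IntervalIntegrable (fun τ => U (t - τ) (b τ)) volume 0 t) :
    (U t x + ∫ τ in (0:ℝ)..t, U (t - τ) (a τ)) - (U t y + ∫ τ in (0:ℝ)..t, U (t - τ) (b τ))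
      = U t (x - y) + ∫ τ in (0:ℝ)..t, U (t - τ) (a τ - b τ) := by
  simp only [map_sub, intervalIntegral.integral_sub ha hb]
  abel

theorem map_add_integral_apply_sub [CompleteSpace E] {Q : E →L[ℝ] E}
    (hQU : ∀ t, Q.comp (U t) = (U t).comp Q) {a : ℝ → E} {x : E} {t : ℝ}
    (ha : IntervalIntegrable (fun τ => U (t - τ) (a τ)) volume 0 t) :
    Q (U t x + ∫ τ in (0:ℝ)..t, U (t - τ) (a τ))
      = U t (Q x) + ∫ τ in (0:ℝ)..t, U (t - τ) (Q (a τ)) := by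
  rw [map_add, ← Q.intervalIntegral_comp_comm ha]
  simp only [← ContinuousLinearMap.comp_apply, hQU]

theorem norm_le_mul_exp_of_eq_add_integral (hU : ∀ t x, ‖U t x‖ ≤ ‖x‖) {d g : ℝ → E} {d₀ : E}
    {M c T : ℝ} (hM : 0 ≤ M) (hc : 0 ≤ c) (hd : ContinuousOn d (Icc 0 T))
    (hdg : ∀ t ∈ Icc 0 T, d t = U t d₀ + ∫ τ in (0:ℝ)..t, U (t - τ) (g τ))
    (hg : ∀ τ ∈ Icc 0 T, ‖g τ‖ ≤ M * ‖d τ‖ + c) :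
    ∀ t ∈ Icc 0 T, ‖d t‖ ≤ (‖d₀‖ + c * T) * exp (M * T) := by
  intro t ht
  have hT : 0 ≤ T := ht.1.trans ht.2
  have hgron := le_mul_exp_of_le_add_mul_integral hd.norm (fun _ _ => norm_nonneg _) hM
    (a := ‖d₀‖ + c * T) (fun s hs => ?_) t ht
  · calc ‖d t‖ ≤ (‖d₀‖ + c * T) * exp (M * t) := hgron
      _ ≤ (‖d₀‖ + c * T) * exp (M * T) := by gcongr; exact ht.2
  have hsub : Icc 0 s ⊆ Icc 0 T := Icc_subset_Icc_right hs.2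
  have hint : IntervalIntegrable (fun τ => ‖d τ‖) volume 0 s :=
    (hd.norm.mono hsub).intervalIntegrable_of_Icc hs.1
  calc ‖d s‖ ≤ ‖U s d₀‖ + ‖∫ τ in (0:ℝ)..s, U (s - τ) (g τ)‖ := by
        rw [hdg s hs]; exact norm_add_le _ _
    _ ≤ ‖d₀‖ + ∫ τ in (0:ℝ)..s, (M * ‖d τ‖ + c) :=
        add_le_add (hU _ _) (norm_integral_apply_sub_le hU hs.1
          ((hint.const_mul M).add intervalIntegrable_const) fun τ hτ => hg τ (hsub hτ))
    _ = ‖d₀‖ + c * s + M * ∫ τ in (0:ℝ)..s, ‖d τ‖ := by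
        rw [intervalIntegral.integral_add (hint.const_mul M) intervalIntegrable_const,
          intervalIntegral.integral_const_mul, intervalIntegral.integral_const, smul_eq_mul]
        ring
    _ ≤ ‖d₀‖ + c * T + M * ∫ τ in (0:ℝ)..s, ‖d τ‖ := by gcongr; exact hs.2

theorem sub_eq_add_integral_sub (hU : ∀ t x, ‖U t x‖ ≤ ‖x‖)
    (hUc : ∀ x, Continuous fun t => U t x) {u v F G h : ℝ → E} {T : ℝ}
    (hF : IntegrableOn F (Icc 0 T)) (hG : IntegrableOn G (Icc 0 T)) (hh : IntegrableOn h (Icc 0 T))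
    (hu : ∀ t ∈ Icc 0 T, u t = U t (u 0) + ∫ τ in (0:ℝ)..t, U (t - τ) (F τ + h τ))
    (hv : ∀ t ∈ Icc 0 T, v t = U t (v 0) + ∫ τ in (0:ℝ)..t, U (t - τ) (G τ + h τ)) :
    ∀ t ∈ Icc 0 T, u t - v t = U t (u 0 - v 0) + ∫ τ in (0:ℝ)..t, U (t - τ) (F τ - G τ) := by
  intro t ht
  rw [hu t ht, hv t ht, add_integral_sub_add_integral
    (intervalIntegrable_apply_sub hU hUc (g := fun τ => F τ + h τ) (hF.add hh) ht)
    (intervalIntegrable_apply_sub hU hUc (g := fun τ => G τ + h τ) (hG.add hh) ht)]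
  simp only [add_sub_add_right_eq_sub]

theorem sub_eq_add_integral_map_sub [CompleteSpace E] (hU : ∀ t x, ‖U t x‖ ≤ ‖x‖)
    (hUc : ∀ x, Continuous fun t => U t x) {Q : E →L[ℝ] E} (hQU : ∀ t, Q.comp (U t) = (U t).comp Q)
    {w v a : ℝ → E} {B : ℝ → E →L[ℝ] E} {x : E} {T : ℝ} (ha : ContinuousOn a (Icc 0 T))
    (hB : ContinuousOn B (Icc 0 T)) (hv : ContinuousOn v (Icc 0 T)) (hQx : Q x = x)
    (hw : ∀ t ∈ Icc 0 T, w t = U t x + ∫ τ in (0:ℝ)..t, U (t - τ) (a τ))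
    (hwQ : ∀ t ∈ Icc 0 T, Q (w t) = w t)
    (hvB : ∀ t ∈ Icc 0 T, v t = U t x + ∫ τ in (0:ℝ)..t, U (t - τ) (Q (B τ (v τ)))) :
    ∀ t ∈ Icc 0 T, w t - v t = U t 0 + ∫ τ in (0:ℝ)..t, U (t - τ) (Q (a τ - B τ (v τ))) := by
  intro t ht
  have hint {g : ℝ → E} (hg : ContinuousOn g (Icc 0 T)) :
      IntervalIntegrable (fun τ => U (t - τ) (g τ)) volume 0 t :=
    intervalIntegrable_apply_sub hU hUc hg.integrableOn_Icc ht
  rw [← hwQ t ht, hw t ht, map_add_integral_apply_sub hQU (hint ha), hQx, hvB t ht,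
    add_integral_sub_add_integral (a := fun τ => Q (a τ)) (b := fun τ => Q (B τ (v τ)))
      (hint (Q.continuous.comp_continuousOn ha))
      (hint (Q.continuous.comp_continuousOn (hB.clm_apply hv))), sub_self]
  simp only [map_sub]

end Duhamel

theorem stmt_14_general
    {X : Type*} [NormedAddCommGroup X] [InnerProductSpace ℝ X] [CompleteSpace X]
    (T R₀ M L 𝔠 : ℝ) (hT : 0 < T) (hM : 0 < M) (hL : 0 < L) (h𝔠 : 0 < 𝔠)
    (U : ℝ → X →L[ℝ] X)
    (hUiso : ∀ (t : ℝ) (x : X), ‖U t x‖ = ‖x‖)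
    (hUcont : ∀ x : X, Continuous fun t : ℝ => U t x)
    -- `Q` is an orthogonal projection commuting with the group `U`
    (Q : X →L[ℝ] X)
    (hQidem : Q.comp Q = Q)
    (hQsa : ∀ x y : X, ⟪Q x, y⟫ = ⟪x, Q y⟫)
    (hQU : ∀ t : ℝ, Q.comp (U t) = (U t).comp Q)
    (Cop : X →L[ℝ] X)
    -- the nonlinearity
    (f : X → X) (Df : X → X →L[ℝ] X)
    (hdiff : ∀ x : X, HasFDerivAt f (Df x) x)
    (hDfM : ∀ x ∈ Metric.closedBall (0 : X) (2 * R₀), ‖Df x‖ ≤ M)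
    (hDfL : ∀ x ∈ Metric.closedBall (0 : X) (2 * R₀),
      ∀ y ∈ Metric.closedBall (0 : X) (2 * R₀), ‖Df x - Df y‖ ≤ L * ‖x - y‖) :
    ∃ Kc : ℝ, 0 < Kc ∧
      ∀ (u u' h : ℝ → X) (S : ℝ → X →L[ℝ] X),
        ContinuousOn u (Icc 0 T) → ContinuousOn u' (Icc 0 T) →
        (∀ t ∈ Icc (0:ℝ) T, ‖u t‖ ≤ R₀) → (∀ t ∈ Icc (0:ℝ) T, ‖u' t‖ ≤ R₀) →
        IntegrableOn h (Icc 0 T) →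
        -- both are mild solutions with the same source `h`
        (∀ t ∈ Icc (0:ℝ) T,
          u t = U t (u 0) + ∫ τ in (0:ℝ)..t, U (t - τ) (f (u τ) + h τ)) →
        (∀ t ∈ Icc (0:ℝ) T,
          u' t = U t (u' 0) + ∫ τ in (0:ℝ)..t, U (t - τ) (f (u' τ) + h τ)) →
        -- same observation
        (∀ t ∈ Icc (0:ℝ) T, Cop (u t) = Cop (u' t)) →
        -- same low-frequency part
        (∀ t ∈ Icc (0:ℝ) T, u t - Q (u t) = u' t - Q (u' t)) →
        -- `S` is the evolution operator of the potential `τ ↦ Q ∘ Df(u'(τ))`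
        (∀ x : X, ContinuousOn (fun t => S t x) (Icc 0 T)) →
        (∀ x : X, ∀ t ∈ Icc (0:ℝ) T,
          S t x = U t x + ∫ τ in (0:ℝ)..t, U (t - τ) (Q (Df (u' τ) (S τ x)))) →
        -- observability inequality on the range of `Q`
        (∀ w₀ ∈ Set.range Q,
          ‖w₀‖ ^ 2 ≤ 𝔠 ^ 2 * ∫ t in Icc (0:ℝ) T, ‖Cop (S t w₀)‖ ^ 2) →
        (⨆ t : Icc (0:ℝ) T, ‖u (t : ℝ) - u' (t : ℝ)‖) < 1 / (Kc * L) →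
        ∀ t ∈ Icc (0:ℝ) T, u t = u' t := by
  set e := exp (M * T)
  refine ⟨𝔠 * √T * ‖Cop‖ * T * e ^ 2 + 1, by positivity, ?_⟩
  intro u u' h S hu hu' huR hu'R hh hu_eq hu'_eq hobs hlow hSc hS hobsQ hsmall
  have hU (t : ℝ) (x : X) : ‖U t x‖ ≤ ‖x‖ := (hUiso t x).le
  have hT₀ : (0:ℝ) ∈ Icc 0 T := ⟨le_rfl, hT.le⟩
  have hf : Continuous f := continuous_iff_continuousAt.2 fun x => (hdiff x).continuousAt
  have hDf : ContinuousOn (fun τ => Df (u' τ)) (Icc 0 T) :=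
    (LipschitzOnWith.of_dist_le' (K := L) fun x hx y hy => by
      simpa only [dist_eq_norm] using hDfL x hx y hy).continuousOn.comp hu'
      fun τ hτ => mem_closedBall_zero_two_mul (hu'R τ hτ)
  set ε := ⨆ t : Icc (0:ℝ) T, ‖u t - u' t‖
  have hε (t) (ht : t ∈ Icc (0:ℝ) T) : ‖u t - u' t‖ ≤ ε := (hu.sub hu').norm.le_ciSup_Icc ht
  have hwQ (t) (ht : t ∈ Icc (0:ℝ) T) : Q (u t - u' t) = u t - u' t := by
    rw [map_sub]
    linear_combination (norm := module) -(hlow t ht)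
  have hw_eq := sub_eq_add_integral_sub hU hUcont (hf.comp_continuousOn hu).integrableOn_Icc
    (hf.comp_continuousOn hu').integrableOn_Icc hh hu_eq hu'_eq
  have hw : ∀ t ∈ Icc 0 T, ‖u t - u' t‖ ≤ ‖u 0 - u' 0‖ * e := by
    simpa using norm_le_mul_exp_of_eq_add_integral hU hM.le le_rfl (d := fun t => u t - u' t)
      (hu.sub hu') hw_eq fun τ hτ => by
        simpa using (convex_closedBall _ _).norm_image_sub_le_of_norm_hasFDerivWithin_le
          (fun z _ => (hdiff z).hasFDerivWithinAt) hDfM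
          (mem_closedBall_zero_two_mul (hu'R τ hτ)) (mem_closedBall_zero_two_mul (huR τ hτ))
  have hd : ∀ t ∈ Icc 0 T, ‖u t - u' t - S t (u 0 - u' 0)‖ ≤ L * ε ^ 2 * T * e := by
    simpa using norm_le_mul_exp_of_eq_add_integral hU hM.le (by positivity)
      (d := fun t => u t - u' t - S t (u 0 - u' 0)) ((hu.sub hu').sub (hSc _))
      (sub_eq_add_integral_map_sub hU hUcont hQU (a := fun τ => f (u τ) - f (u' τ))
        ((hf.comp_continuousOn hu).sub (hf.comp_continuousOn hu')) hDf (hSc _) (hwQ 0 hT₀)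
        hw_eq hwQ (hS _)) fun τ hτ =>
      (norm_apply_le_of_idempotent_of_symmetric hQidem hQsa _).trans
        ((norm_sub_sub_fderiv_apply_le_add (convex_closedBall _ _)
          (fun z _ => (hdiff z).hasFDerivWithinAt) hDfM hDfL
          (mem_closedBall_zero_two_mul (huR τ hτ)) (mem_closedBall_zero_two_mul (hu'R τ hτ))
          _).trans (by gcongr; exact hε τ hτ))
  have hw₀ : ‖u 0 - u' 0‖ ≤ 𝔠 * √T * (‖Cop‖ * (L * ε ^ 2 * T * e)) := by
    refine le_mul_sqrt_mul_of_sq_le_integral h𝔠.le hT.le (hobsQ _ ⟨_, hwQ 0 hT₀⟩) fun t ht => ?_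
    have hCop : Cop (S t (u 0 - u' 0)) = -Cop (u t - u' t - S t (u 0 - u' 0)) := by
      simp [hobs t ht]
    rw [hCop, norm_neg]
    exact Cop.le_of_opNorm_le_of_le le_rfl (hd t ht)
  refine fun t ht => sub_eq_zero.1 <| norm_eq_zero.1 <| eq_zero_of_le_mul_iSup_sq hT.le
    (hu.sub hu').norm (fun _ _ => norm_nonneg _) (fun t ht => ?_) hsmall t ht
  calc ‖u t - u' t‖ ≤ ‖u 0 - u' 0‖ * e := hw t ht
    _ ≤ 𝔠 * √T * (‖Cop‖ * (L * ε ^ 2 * T * e)) * e := by gcongr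
    _ = 𝔠 * √T * ‖Cop‖ * T * e ^ 2 * L * ε ^ 2 := by ring
    _ ≤ (𝔠 * √T * ‖Cop‖ * T * e ^ 2 + 1) * L * ε ^ 2 := by gcongr; linarith

/-- finite determining modes — two bounded solutions of the
semilinear equation with the same observation and the same low-frequency part
coincide, provided they are close enough (with a uniform threshold `1/(K·L)`). -/
theorem stmt_14
    {X : Type*} [NormedAddCommGroup X] [InnerProductSpace ℝ X] [CompleteSpace X]
    (T R₀ M L 𝔠 : ℝ) (hT : 0 < T) (hR₀ : 0 < R₀) (hM : 0 < M) (hL : 0 < L) (h𝔠 : 0 < 𝔠)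
    (U : ℝ → X →L[ℝ] X)
    (hU0 : U 0 = ContinuousLinearMap.id ℝ X)
    (hUadd : ∀ a b : ℝ, U (a + b) = (U a).comp (U b))
    (hUiso : ∀ (t : ℝ) (x : X), ‖U t x‖ = ‖x‖)
    (hUcont : ∀ x : X, Continuous fun t : ℝ => U t x)
    -- `Q` is an orthogonal projection commuting with the group `U`
    (Q : X →L[ℝ] X)
    (hQidem : Q.comp Q = Q)
    (hQsa : ∀ x y : X, ⟪Q x, y⟫ = ⟪x, Q y⟫)
    (hQU : ∀ t : ℝ, Q.comp (U t) = (U t).comp Q)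
    (Cop : X →L[ℝ] X)
    -- the nonlinearity
    (f : X → X) (Df : X → X →L[ℝ] X)
    (hdiff : ∀ x : X, HasFDerivAt f (Df x) x)
    (hDfM : ∀ x ∈ Metric.closedBall (0 : X) (2 * R₀), ‖Df x‖ ≤ M)
    (hDfL : ∀ x ∈ Metric.closedBall (0 : X) (2 * R₀),
      ∀ y ∈ Metric.closedBall (0 : X) (2 * R₀), ‖Df x - Df y‖ ≤ L * ‖x - y‖) :
    ∃ Kc : ℝ, 0 < Kc ∧
      ∀ (u u' h : ℝ → X) (S : ℝ → X →L[ℝ] X),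
        ContinuousOn u (Icc 0 T) → ContinuousOn u' (Icc 0 T) →
        (∀ t ∈ Icc (0:ℝ) T, ‖u t‖ ≤ R₀) → (∀ t ∈ Icc (0:ℝ) T, ‖u' t‖ ≤ R₀) →
        IntegrableOn h (Icc 0 T) →
        -- both are mild solutions with the same source `h`
        (∀ t ∈ Icc (0:ℝ) T,
          u t = U t (u 0) + ∫ τ in (0:ℝ)..t, U (t - τ) (f (u τ) + h τ)) →
        (∀ t ∈ Icc (0:ℝ) T,
          u' t = U t (u' 0) + ∫ τ in (0:ℝ)..t, U (t - τ) (f (u' τ) + h τ)) →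
        -- same observation
        (∀ t ∈ Icc (0:ℝ) T, Cop (u t) = Cop (u' t)) →
        -- same low-frequency part
        (∀ t ∈ Icc (0:ℝ) T, u t - Q (u t) = u' t - Q (u' t)) →
        -- `S` is the evolution operator of the potential `τ ↦ Q ∘ Df(u'(τ))`
        (∀ x : X, ContinuousOn (fun t => S t x) (Icc 0 T)) →
        (∀ x : X, ∀ t ∈ Icc (0:ℝ) T,
          S t x = U t x + ∫ τ in (0:ℝ)..t, U (t - τ) (Q (Df (u' τ) (S τ x)))) →
        -- observability inequality on the range of `Q`
        (∀ w₀ ∈ Set.range Q,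
          ‖w₀‖ ^ 2 ≤ 𝔠 ^ 2 * ∫ t in Icc (0:ℝ) T, ‖Cop (S t w₀)‖ ^ 2) →
        (⨆ t : Icc (0:ℝ) T, ‖u (t : ℝ) - u' (t : ℝ)‖) < 1 / (Kc * L) →
        ∀ t ∈ Icc (0:ℝ) T, u t = u' t :=
  stmt_14_general T R₀ M L 𝔠 hT hM hL h𝔠 U hUiso hUcont Q hQidem hQsa hQU Cop f Df hdiff hDfM hDfL
end
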